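/- Let (E,e,T) be a T-universally complete conditional Riesz triple. Then the set ba(T) of T-absolutely continuous order bounded signed R(T)-valued charges on C_e is an R(T)-submodule of ba(C_e,R(T)) and a projection band in ba(C_e,R(T)). -/

import Mathlib

open scoped Classical

noncomputable section

namespace RieszPaper

universe u v w

/-! ### Basic Riesz space notions -/

section BasicDefs

variable {E : Type u} [Lattice E] [AddCommGroup E]

/-- The positive part `x ⊔ 0`. -/
def rpos (x : E) : E := x ⊔ 0

/-- The set of components of `e`, i.e. elements `p` with `p ⊓ (e - p) = 0`. -/
def Comp (e : E) : Set E := {p | p ⊓ (e - p) = 0}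

/-- Disjoint complement of a set. -/
def disjC (S : Set E) : Set E := {x | ∀ y ∈ S, |x| ⊓ |y| = 0}

/-- The principal band generated by `f` (as double disjoint complement). -/
def pBand (f : E) : Set E := disjC (disjC {f})

/-- `e` is a weak order unit: `e > 0` and the band generated by `e` is all of `E`. -/
def IsWeakUnit (e : E) : Prop := 0 < e ∧ ∀ x : E, 0 ≤ x → x ⊓ e = 0 → x = 0

/-- The chain `x ⊓ n•|f|`, whose supremum is the band projection of `x ≥ 0`
onto the band generated by `f`. -/
def projChain (f x : E) : Set E := {y | ∃ n : ℕ, y = x ⊓ n • |f|}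

/-- Band projection of a positive element onto the band generated by `f`. -/
def projP (f x : E) : E := if h : ∃ s, IsLUB (projChain f x) s then h.choose else 0

/-- Band projection onto the principal band generated by `f`. -/
def proj (f x : E) : E := projP f (rpos x) - projP f (rpos (-x))

/-- The principal projection property. -/
def HasPPP (α : Type u) [Lattice α] [AddCommGroup α] : Prop :=
  ∀ f x : α, 0 ≤ x → ∃ s, IsLUB (projChain f x) s

/-- A subset is sequentially order closed. -/
def SeqOrderClosed (D : Set E) : Prop :=
  (∀ (x : ℕ → E) (l : E), (∀ n, x n ∈ D) → Monotone x → IsLUB (Set.range x) l → l ∈ D) ∧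
  (∀ (x : ℕ → E) (l : E), (∀ n, x n ∈ D) → Antitone x → IsGLB (Set.range x) l → l ∈ D)

end BasicDefs

/-! ### Charges on components -/

section Charges

variable {E : Type u} [Lattice E] [AddCommGroup E]
variable {F : Type v} [Lattice F] [AddCommGroup F]

/-- `μ` is an `F`-valued signed charge on the components of `e`. -/
def IsChargeOn (e : E) (μ : E → F) : Prop :=
  μ 0 = 0 ∧ ∀ p q : E, p ∈ Comp e → q ∈ Comp e → p ⊓ q = 0 → μ (p + q) = μ p + μ q

/-- `μ` is order bounded on the components of `e`. -/
def OrdBddOn (e : E) (μ : E → F) : Prop :=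
  ∃ g : F, 0 ≤ g ∧ ∀ p ∈ Comp e, |μ p| ≤ g

/-- `ba(C_e, F)`: order bounded signed `F`-valued charges on the components of `e`. -/
def baSet (e : E) : Set (E → F) := {μ | IsChargeOn e μ ∧ OrdBddOn e μ}

/-- The order on charges: `μ ≤ ν` iff `ν - μ` is positive on components. -/
def baLe (e : E) (μ ν : E → F) : Prop := ∀ p ∈ Comp e, μ p ≤ ν p

/-- `η` is the least upper bound of `S ⊆ ba(C_e,F)` within `ba(C_e,F)`. -/
def IsLUBba (e : E) (S : Set (E → F)) (η : E → F) : Prop :=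
  η ∈ baSet e ∧ (∀ μ ∈ S, baLe e μ η) ∧
    ∀ ξ ∈ baSet e, (∀ μ ∈ S, baLe e μ ξ) → baLe e η ξ

/-- `η` is the greatest lower bound of `S ⊆ ba(C_e,F)` within `ba(C_e,F)`. -/
def IsGLBba (e : E) (S : Set (E → F)) (η : E → F) : Prop :=
  η ∈ baSet e ∧ (∀ μ ∈ S, baLe e η μ) ∧
    ∀ ξ ∈ baSet e, (∀ μ ∈ S, baLe e ξ μ) → baLe e ξ η

end Charges

section ChargesCCL

variable {E : Type u} [Lattice E] [AddCommGroup E]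
variable {F : Type v} [ConditionallyCompleteLattice F] [AddCommGroup F]

/-- Pointwise formula for the supremum of two charges. -/
def chSupAt (e : E) (μ ν : E → F) (p : E) : F :=
  sSup {v | ∃ q, q ∈ Comp e ∧ q ≤ p ∧ v = μ q + ν (p - q)}

/-- Pointwise formula for the infimum of two charges. -/
def chInfAt (e : E) (μ ν : E → F) (p : E) : F :=
  sInf {v | ∃ q, q ∈ Comp e ∧ q ≤ p ∧ v = μ q + ν (p - q)}

/-- The modulus of a charge, via the Riesz–Kantorovich-type formula. -/
def chargeAbs (e : E) (μ : E → F) : E → F :=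
  fun p => sSup {v | ∃ q, q ∈ Comp e ∧ q ≤ p ∧ v = μ q - μ (p - q)}

/-- The positive part of a charge. -/
def chargePos (e : E) (μ : E → F) : E → F :=
  fun p => sSup {v | ∃ q, q ∈ Comp e ∧ q ≤ p ∧ v = μ q}

/-- The negative part of a charge. -/
def chargeNeg (e : E) (μ : E → F) : E → F :=
  fun p => sSup {v | ∃ q, q ∈ Comp e ∧ q ≤ p ∧ v = -(μ q)}

end ChargesCCL

/-! ### Operators -/

section Ops

variable {E : Type u} [Lattice E] [AddCommGroup E] [Module ℝ E]

def PosOn (Lp : Set E) (φ : E → E) : Prop := ∀ f ∈ Lp, 0 ≤ f → 0 ≤ φ f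

def AddOn (Lp : Set E) (φ : E → E) : Prop :=
  ∀ f g : E, f ∈ Lp → g ∈ Lp → φ (f + g) = φ f + φ g

def SmulOn (Lp : Set E) (φ : E → E) : Prop :=
  ∀ (r : ℝ) (f : E), f ∈ Lp → φ (r • f) = r • φ f

/-- `φ` is a regular operator on `Lp`: a difference of two positive linear maps. -/
def RegularOn (Lp : Set E) (φ : E → E) : Prop :=
  ∃ ψ₁ ψ₂ : E → E, AddOn Lp ψ₁ ∧ AddOn Lp ψ₂ ∧ SmulOn Lp ψ₁ ∧ SmulOn Lp ψ₂ ∧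
    PosOn Lp ψ₁ ∧ PosOn Lp ψ₂ ∧ ∀ f ∈ Lp, φ f = ψ₁ f - ψ₂ f

/-- Uniform convergence of a sequence with regulator `u`. -/
def UnifConv (u : E) (s : ℕ → E) (f : E) : Prop :=
  ∃ ε : ℕ → ℝ, Antitone ε ∧ Filter.Tendsto ε Filter.atTop (nhds 0) ∧
    ∀ n, |f - s n| ≤ ε n • u

end Ops

/-! ### Conditional expectation operators -/

section CondExp

variable {E : Type u} [ConditionallyCompleteLattice E] [AddCommGroup E] [Module ℝ E]

/-- `(E, e, T)` is a conditional Riesz triple: `e` is a weak order unit and `T` is a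
strictly positive conditional expectation operator with `T e = e` whose range is a
Dedekind complete Riesz subspace. -/
structure IsCondTriple (e : E) (T : E →ₗ[ℝ] E) : Prop where
  weakUnit : IsWeakUnit e
  pos : ∀ x : E, 0 ≤ x → 0 ≤ T x
  strictPos : ∀ x : E, 0 < x → 0 < T x
  ordCont : ∀ (A : Set E) (s : E), A.Nonempty → DirectedOn (· ≤ ·) A →
    IsLUB A s → IsLUB (T '' A) (T s)
  idem : ∀ x : E, T (T x) = T x
  unitFix : T e = e
  rangeSupClosed : ∀ x y : E, x ∈ Set.range T → y ∈ Set.range T → x ⊔ y ∈ Set.range T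
  rangeDedekind : ∀ A : Set E, A ⊆ Set.range T → A.Nonempty → BddAbove A →
    sSup A ∈ Set.range T

end CondExp

/-! ### Universal completion and T-universal completeness -/

section Univ

variable {E : Type u} {G : Type v}
variable [ConditionallyCompleteLattice E] [AddCommGroup E] [Module ℝ E]
variable [ConditionallyCompleteLattice G] [AddCommGroup G] [Module ℝ G]

/-- `j : E → G` realizes `G` as a universal completion of `E`. -/
structure IsUnivCompletion (j : E →ₗ[ℝ] G) : Prop where
  bipos : ∀ x : E, 0 ≤ j x ↔ 0 ≤ x
  latHom : ∀ x y : E, j (x ⊔ y) = j x ⊔ j y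
  dense : ∀ z : G, 0 < z → ∃ x : E, 0 < j x ∧ j x ≤ z
  univComplete : ∀ S : Set G, (∀ x ∈ S, 0 ≤ x) →
    S.Pairwise (fun a b => a ⊓ b = 0) → BddAbove S

/-- `E` is `T`-universally complete (relative to the universal completion `j : E → G`):
every nonempty upwards directed subset `A ⊆ E` such that `j[T[A]]` is bounded above in
`G` has a supremum in `E`. -/
def TUnivComplete (T : E →ₗ[ℝ] E) (j : E →ₗ[ℝ] G) : Prop :=
  ∀ A : Set E, A.Nonempty → DirectedOn (· ≤ ·) A →
    BddAbove (⇑j '' (⇑T '' A)) → BddAbove A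

end Univ

/-- `mul` is a commutative `f`-algebra multiplication with unit `u`. -/
structure IsFAlgebraMul {G : Type v} [Lattice G] [AddCommGroup G] [Module ℝ G]
    (u : G) (mul : G → G → G) : Prop where
  comm : ∀ x y, mul x y = mul y x
  assoc : ∀ x y z, mul (mul x y) z = mul x (mul y z)
  add_left : ∀ x y z, mul (x + y) z = mul x z + mul y z
  smul_left : ∀ (r : ℝ) (x y), mul (r • x) y = r • mul x y
  one_mul : ∀ x, mul u x = x
  mul_nonneg : ∀ x y, 0 ≤ x → 0 ≤ y → 0 ≤ mul x y
  disj : ∀ x y z, x ⊓ y = 0 → 0 ≤ z → mul x z ⊓ y = 0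

/-! ### Bundled T-universally complete conditional Riesz triples -/

/-- A `T`-universally complete conditional Riesz triple `(E, e, T)`, together with a
universal completion `j : E → G` carrying its `f`-algebra multiplication (with unit
`j e`).  Since `E = L¹(T)` is an `R(T)`-module, products of elements of `L^∞(T)` with
elements of `E` again lie in `E` (`mulClosed`). -/
structure CRT (E : Type u) (G : Type v)
    [ConditionallyCompleteLattice E] [AddCommGroup E] [Module ℝ E]
    [CovariantClass E E (· + ·) (· ≤ ·)] [PosSMulMono ℝ E]
    [ConditionallyCompleteLattice G] [AddCommGroup G] [Module ℝ G]
    [CovariantClass G G (· + ·) (· ≤ ·)] [PosSMulMono ℝ G] where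
  e : E
  T : E →ₗ[ℝ] E
  j : E →ₗ[ℝ] G
  mul : G → G → G
  triple : IsCondTriple e T
  compl : IsUnivCompletion j
  falg : IsFAlgebraMul (j e) mul
  tuc : TUnivComplete T j
  mulClosed : ∀ f g : E, (∃ h : E, h ∈ Set.range T ∧ 0 ≤ h ∧ |f| ≤ h) →
    mul (j f) (j g) ∈ Set.range ⇑j

namespace CRT

variable {E : Type u} {G : Type v}
variable [ConditionallyCompleteLattice E] [AddCommGroup E] [Module ℝ E]
  [CovariantClass E E (· + ·) (· ≤ ·)] [PosSMulMono ℝ E]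
variable [ConditionallyCompleteLattice G] [AddCommGroup G] [Module ℝ G]
  [CovariantClass G G (· + ·) (· ≤ ·)] [PosSMulMono ℝ G]
variable (C : CRT E G)

/-- The range `R(T)`. -/
def R : Set E := Set.range ⇑C.T

/-- The product `g · f` of two elements of `E = L¹(T)`, computed in the universal
completion (meaningful whenever the product lies again in `E`, e.g. for
`g ∈ R(T)` or `g ∈ L^∞(T)`). -/
def sm (g f : E) : E := @Function.invFun E G ⟨0⟩ (⇑C.j) (C.mul (C.j g) (C.j f))

/-- `L^∞(T) = {f : |f| ≤ g for some g ∈ R(T)₊}`. -/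
def Linf : Set E := {f | ∃ h ∈ C.R, 0 ≤ h ∧ |f| ≤ h}

/-- The `R(T)`-valued norm `‖f‖_{T,1} = T |f|`. -/
def nrm1 (f : E) : E := C.T |f|

/-- The `R(T)`-valued norm `‖f‖_{T,∞} = inf {α ∈ R(T)₊ : |f| ≤ α}`. -/
def nrmInf (f : E) : E := sInf {a | a ∈ C.R ∧ 0 ≤ a ∧ |f| ≤ a}

/-- Order bounded signed `R(T)`-valued charges on the components of `u`. -/
def baR (u : E) : Set (E → E) :=
  {μ | IsChargeOn u μ ∧ (∀ p ∈ Comp u, μ p ∈ C.R) ∧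
     ∃ g ∈ C.R, 0 ≤ g ∧ ∀ p ∈ Comp u, |μ p| ≤ g}

/-- `ba(T)`: the `T`-absolutely continuous charges in `ba(C_e, R(T))`. -/
def baT : Set (E → E) :=
  {μ | μ ∈ C.baR C.e ∧ ∀ p ∈ Comp C.e, μ p ∈ pBand (C.T p)}

/-- `x = ∑ αᵢ pᵢ` is a standard representation of the `e`-step function `x` with
`R(T)`-coefficients. -/
def IsStdRep (x : E) (n : ℕ) (α p : Fin n → E) : Prop :=
  (∀ i, α i ∈ C.R) ∧ (∀ i, p i ∈ Comp C.e) ∧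
  (∀ i j, i ≠ j → p i ⊓ p j = 0) ∧ (∑ i, p i) = C.e ∧
  x = ∑ i, C.sm (α i) (p i)

/-- `S_e(T)`: the `e`-step functions with `R(T)`-coefficients. -/
def Steps : Set E := {x | ∃ (n : ℕ) (α p : Fin n → E), C.IsStdRep x n α p}

/-- The integral `I_μ` of a step function: `I_μ (∑ αᵢ pᵢ) = ∑ αᵢ μ(pᵢ)`. -/
def Imu (μ : E → E) (x : E) : E :=
  @Classical.epsilon E ⟨0⟩ fun v =>
    ∃ (n : ℕ) (α p : Fin n → E), C.IsStdRep x n α p ∧ v = ∑ i, C.sm (α i) (μ (p i))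

/-- The integral of a positive element of `L^∞(T)` with respect to a positive charge. -/
def intPos (μ : E → E) (f : E) : E :=
  sSup {v | ∃ g ∈ C.Steps, 0 ≤ g ∧ g ≤ f ∧ v = C.Imu μ g}

/-- The integral `∫ f dμ = ∫ f⁺ dμ⁺ − ∫ f⁻ dμ⁺ − ∫ f⁺ dμ⁻ + ∫ f⁻ dμ⁻`. -/
def integral (μ : E → E) (f : E) : E :=
  C.intPos (chargePos C.e μ) (rpos f) - C.intPos (chargePos C.e μ) (rpos (-f))
    - C.intPos (chargeNeg C.e μ) (rpos f) + C.intPos (chargeNeg C.e μ) (rpos (-f))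

/-- Membership in `L^r(Lp, R(T))`: regular linear operators with values in `R(T)`. -/
structure MemLr (Lp : Set E) (φ : E → E) : Prop where
  add : AddOn Lp φ
  smul : SmulOn Lp φ
  mem : ∀ f ∈ Lp, φ f ∈ C.R
  regular : RegularOn Lp φ

/-- Membership in the `T`-strong dual of `(Lp, nrm)`: `R(T)`-linear, regular,
`nrm`-bounded maps into `R(T)`. -/
structure MemDual (Lp : Set E) (nrm : E → E) (φ : E → E) : Prop where
  add : AddOn Lp φ
  smul : SmulOn Lp φ
  modHom : ∀ g f : E, g ∈ C.R → f ∈ Lp → φ (C.sm g f) = C.sm g (φ f)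
  mem : ∀ f ∈ Lp, φ f ∈ C.R
  regular : RegularOn Lp φ
  bdd : ∃ k ∈ C.R, 0 ≤ k ∧ ∀ f ∈ Lp, |φ f| ≤ C.sm k (nrm f)

/-- The `R(T)`-valued norm on the `T`-strong dual. -/
def dualNorm (Lp : Set E) (nrm : E → E) (φ : E → E) : E :=
  sInf {g | g ∈ C.R ∧ 0 ≤ g ∧ ∀ f ∈ Lp, |φ f| ≤ C.sm g (nrm f)}

/-- `|φ| ≤ |ψ|` in `L^r(Lp, R(T))`, via the Riesz–Kantorovich formula. -/
def OpAbsLe (Lp : Set E) (φ ψ : E → E) : Prop :=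
  ∀ f ∈ Lp, 0 ≤ f → ∀ g ∈ Lp, |g| ≤ f →
    |φ g| ≤ sSup {v | ∃ h, h ∈ Lp ∧ |h| ≤ f ∧ v = |ψ h|}

/-- The canonical partial inverse of `h` in `R(T)`: the element `g` of the band
generated by `|h|` with `h g = P_{|h|} e`. -/
def pinv (h : E) : E :=
  @Classical.epsilon E ⟨0⟩ fun g =>
    g ∈ C.R ∧ g ∈ pBand (|h|) ∧ C.sm h g = proj (|h|) C.e

end CRT

/-! ### Bundled Dedekind complete Riesz spaces, for existential statements -/

structure BRiesz : Type (u + 1) where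
  carrier : Type u
  [ccl : ConditionallyCompleteLattice carrier]
  [grp : AddCommGroup carrier]
  [mod : Module ℝ carrier]
  [cov : CovariantClass carrier carrier (· + ·) (· ≤ ·)]
  [psm : PosSMulMono ℝ carrier]

attribute [instance] BRiesz.ccl BRiesz.grp BRiesz.mod BRiesz.cov BRiesz.psm

/-- `(F, ẽ, T̃)` together with `i : E → F` is a `T`-universal completion of `(E, e, T)`. -/
structure IsTUnivCompletion
    {E : Type u} [ConditionallyCompleteLattice E] [AddCommGroup E] [Module ℝ E]
    {F : Type v} [ConditionallyCompleteLattice F] [AddCommGroup F] [Module ℝ F]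
    (e : E) (T : E →ₗ[ℝ] E) (e' : F) (T' : F →ₗ[ℝ] F) (i : E →ₗ[ℝ] F) : Prop where
  triple : IsCondTriple e' T'
  tuniv : ∃ (U : BRiesz.{v}) (j : F →ₗ[ℝ] U.carrier),
    IsUnivCompletion j ∧ TUnivComplete T' j
  bipos : ∀ x : E, 0 ≤ i x ↔ 0 ≤ x
  latHom : ∀ x y : E, i (x ⊔ y) = i x ⊔ i y
  dense : ∀ z : F, 0 < z → ∃ x : E, 0 < i x ∧ i x ≤ z
  unit : i e = e'
  comm : ∀ x : E, T' (i x) = i (T x)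


/-! ### Powers via functional calculus, for the spaces `L^p(T)` -/

/-- A `T`-universally complete conditional Riesz triple together with the power
functions `x ↦ x^p` (`x ≥ 0`, `p > 0`) of the functional calculus on the universal
completion. -/
structure CRTP (E : Type u) (G : Type v)
    [ConditionallyCompleteLattice E] [AddCommGroup E] [Module ℝ E]
    [CovariantClass E E (· + ·) (· ≤ ·)] [PosSMulMono ℝ E]
    [ConditionallyCompleteLattice G] [AddCommGroup G] [Module ℝ G]
    [CovariantClass G G (· + ·) (· ≤ ·)] [PosSMulMono ℝ G]
    extends CRT E G where
  epow : G → ℝ → G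
  epow_one : ∀ x : G, 0 ≤ x → epow x 1 = x
  epow_nonneg : ∀ (x : G) (p : ℝ), 0 ≤ x → 0 < p → 0 ≤ epow x p
  epow_mono : ∀ (x y : G) (p : ℝ), 0 ≤ x → x ≤ y → 0 < p → epow x p ≤ epow y p
  epow_unit : ∀ p : ℝ, 0 < p → epow (toCRT.j toCRT.e) p = toCRT.j toCRT.e
  epow_exp_mul : ∀ (x : G) (p q : ℝ), 0 ≤ x → 0 < p → 0 < q →
    epow (epow x p) q = epow x (p * q)
  epow_mul : ∀ (x y : G) (p : ℝ), 0 ≤ x → 0 ≤ y → 0 < p →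
    epow (toCRT.mul x y) p = toCRT.mul (epow x p) (epow y p)
  epow_succ : ∀ (x : G) (n : ℕ), 0 ≤ x → 0 < n →
    epow x ((n : ℝ) + 1) = toCRT.mul (epow x (n : ℝ)) x
  epow_sup : ∀ (x y : G) (p : ℝ), 0 ≤ x → 0 ≤ y → 0 < p →
    epow (x ⊔ y) p = epow x p ⊔ epow y p
  epow_rangeT : ∀ (x : E) (p : ℝ), 0 ≤ x → 0 < p → x ∈ Set.range ⇑toCRT.T →
    epow (toCRT.j x) p ∈ ⇑toCRT.j '' Set.range ⇑toCRT.T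

namespace CRTP

variable {E : Type u} {G : Type v}
variable [ConditionallyCompleteLattice E] [AddCommGroup E] [Module ℝ E]
  [CovariantClass E E (· + ·) (· ≤ ·)] [PosSMulMono ℝ E]
variable [ConditionallyCompleteLattice G] [AddCommGroup G] [Module ℝ G]
  [CovariantClass G G (· + ·) (· ≤ ·)] [PosSMulMono ℝ G]
variable (C : CRTP E G)

/-- the `p`-th power of `x ∈ E`, computed in the universal completion. -/
def powE (x : E) (p : ℝ) : E :=
  @Function.invFun E G ⟨0⟩ (⇑C.toCRT.j) (C.epow (C.toCRT.j x) p)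

/-- `L^p(T) = {f ∈ L¹(T) : |f|^p ∈ L¹(T)}` for `p ∈ [1, ∞)`. -/
def LpSet (p : ℝ) : Set E := {f | C.epow (C.toCRT.j |f|) p ∈ Set.range ⇑C.toCRT.j}

/-- The `R(T)`-valued norm `‖f‖_{T,p} = (T |f|^p)^{1/p}`. -/
def nrmP (p : ℝ) (f : E) : E := C.powE (C.toCRT.T (C.powE |f| p)) (1 / p)

end CRTP

/-!
For a positive charge `π ∈ ba(C_e, R(T))`, the `T`-absolutely continuous charges between `0`
and `π` are upwards directed (the supremum `q ↦ sup (ν₁ q' + ν₂ (q - q'))` of two of them is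
again one), and their pointwise supremum `ρ` is `T`-absolutely continuous because principal
bands are closed under suprema. The remainder `π - ρ` is disjoint from every positive
`T`-absolutely continuous `B`: `inf(π - ρ, B)` is absolutely continuous, so adding it to `ρ`
stays below `π`, which forces it to vanish. Splitting `μ = μ⁺ - μ⁻` gives the decomposition
`μ = (ρ(μ⁺) - ρ(μ⁻)) + ((μ⁺ - ρ(μ⁺)) - (μ⁻ - ρ(μ⁻)))`.

The `R(T)`-module structure needs `R(T)` to be closed under the `f`-algebra product. In a
Dedekind complete unital `f`-algebra `a² = sup_{r ≥ 0} (2 r a - r² e)` for `a ≥ 0` (cut `a`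
into pieces where `r ≤ a ≤ r + δ` using band projections of the unit), so `a²` lies in the
Dedekind complete Riesz subspace `R(T) ∋ e`; general products follow by polarization.
-/

end RieszPaper

lemma inf_eq_zero_of_le {α : Type*} [Lattice α] [Zero α] {a b c : α} (hb : 0 ≤ b)
    (hc : 0 ≤ c) (hba : b ≤ a) (h : a ⊓ c = 0) : b ⊓ c = 0 :=
  le_antisymm ((inf_le_inf_right c hba).trans h.le) (le_inf hb hc)

lemma inf_eq_zero_of_le_of_le {α : Type*} [Lattice α] [Zero α] {a b c d : α} (ha : 0 ≤ a)
    (hb : 0 ≤ b) (hac : a ≤ c) (hbd : b ≤ d) (h : c ⊓ d = 0) : a ⊓ b = 0 :=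
  le_antisymm ((inf_le_inf hac hbd).trans h.le) (le_inf ha hb)

section LatticeOrderedGroup

variable {α : Type*} [Lattice α] [AddCommGroup α] [AddLeftMono α]

lemma add_eq_sup_of_inf_eq_zero {a b : α} (h : a ⊓ b = 0) : a + b = a ⊔ b := by
  rw [← inf_add_sup a b, h, zero_add]

lemma inf_add_le_add_inf {a b c : α} (ha : 0 ≤ a) (hb : 0 ≤ b) (hc : 0 ≤ c) :
    a ⊓ (b + c) ≤ a ⊓ b + a ⊓ c := by
  have h1 : a ⊓ (b + c) ≤ b + a ⊓ c := by
    rw [show a ⊓ (b + c) = (a - b) ⊓ c + b by rw [inf_add, sub_add_cancel, add_comm c b],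
      add_comm]
    exact add_le_add_right (inf_le_inf_right c (sub_le_self a hb)) b
  refine sub_le_iff_le_add.mp (le_inf ?_ ?_)
  · exact sub_le_iff_le_add.mpr (inf_le_left.trans (le_add_of_nonneg_right (le_inf ha hc)))
  · exact sub_le_iff_le_add.mpr h1

lemma add_inf_eq_zero {a b c : α} (ha : 0 ≤ a) (hb : 0 ≤ b) (hc : 0 ≤ c)
    (hac : a ⊓ c = 0) (hbc : b ⊓ c = 0) : (a + b) ⊓ c = 0 := by
  refine le_antisymm ?_ (le_inf (add_nonneg ha hb) hc)
  calc (a + b) ⊓ c = c ⊓ (a + b) := inf_comm _ _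
    _ ≤ c ⊓ a + c ⊓ b := inf_add_le_add_inf hc ha hb
    _ = 0 := by rw [inf_comm c a, inf_comm c b, hac, hbc, add_zero]

lemma nsmul_inf_eq_zero {a c : α} (ha : 0 ≤ a) (hc : 0 ≤ c) (h : a ⊓ c = 0) (n : ℕ) :
    (n • a) ⊓ c = 0 := by
  induction n with
  | zero => rw [zero_nsmul]; exact inf_eq_left.mpr hc
  | succ n ih => rw [succ_nsmul]; exact add_inf_eq_zero (nsmul_nonneg ha n) ha hc ih h

lemma posPart_le_abs (a : α) : a⁺ ≤ |a| := by
  rw [← posPart_add_negPart a]; exact le_add_of_nonneg_right (negPart_nonneg a)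

lemma negPart_le_abs (a : α) : a⁻ ≤ |a| := by
  rw [← posPart_add_negPart a]; exact le_add_of_nonneg_left (posPart_nonneg a)

lemma abs_sub_le_abs_add_abs (a b : α) : |a - b| ≤ |a| + |b| := by
  simpa only [sub_eq_add_neg, abs_neg] using abs_add_le a (-b)

lemma sub_inf_self_eq_posPart (a b : α) : a - a ⊓ b = (a - b)⁺ := by
  rw [sub_inf a b a, sub_self, posPart_def, sup_comm]

end LatticeOrderedGroup

section DedekindComplete

variable {α : Type*} [ConditionallyCompleteLattice α] [AddCommGroup α] [AddLeftMono α]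

lemma nonpos_of_forall_nsmul_le {a b : α} (h : ∀ n : ℕ, n • a ≤ b) : a ≤ 0 := by
  have hbdd : BddAbove (Set.range fun n : ℕ => n • a) := ⟨b, by rintro x ⟨n, rfl⟩; exact h n⟩
  set s := sSup (Set.range fun n : ℕ => n • a)
  have hs : s ≤ s - a := csSup_le (Set.range_nonempty _) <| by
    rintro x ⟨n, rfl⟩
    exact le_sub_iff_add_le.mpr (succ_nsmul a n ▸ le_csSup hbdd ⟨n + 1, rfl⟩)
  exact (add_le_iff_nonpos_right s).mp (le_sub_iff_add_le.mp hs)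

lemma nonpos_of_forall_le_smul [Module ℝ α] [PosSMulMono ℝ α] {x b : α} (hb : 0 ≤ b)
    (h : ∀ ε : ℝ, 0 < ε → x ≤ ε • b) : x ≤ 0 := by
  refine nonpos_of_forall_nsmul_le (b := b) fun n => ?_
  rcases Nat.eq_zero_or_pos n with rfl | hn
  · rwa [zero_nsmul]
  have hn' : (0 : ℝ) < n := Nat.cast_pos.mpr hn
  calc n • x = (n : ℝ) • x := (Nat.cast_smul_eq_nsmul ℝ n x).symm
    _ ≤ (n : ℝ) • ((n : ℝ)⁻¹ • b) := smul_le_smul_of_nonneg_left (h _ (inv_pos.mpr hn')) hn'.le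
    _ = b := smul_inv_smul₀ hn'.ne' b

lemma IsLUB.abs_inf_eq_zero {S : Set α} {s d : α} (hs : IsLUB S s) (hS : S.Nonempty)
    (hd : 0 ≤ d) (h : ∀ x ∈ S, |x| ⊓ d = 0) : |s| ⊓ d = 0 := by
  set c := s⁺ ⊓ d
  have hc0 : 0 ≤ c := le_inf (posPart_nonneg s) hd
  -- `s⁺ - c` is still an upper bound of `S`, since every `x⁺` is disjoint from `c`
  have hub : s⁺ - c ∈ upperBounds S := fun x hx => by
    have hxc : x⁺ ⊓ c = 0 := inf_eq_zero_of_le_of_le (posPart_nonneg x) hc0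
      (posPart_le_abs x) inf_le_right (h x hx)
    refine (le_posPart x).trans (le_sub_iff_add_le.mpr ?_)
    rw [add_eq_sup_of_inf_eq_zero hxc]
    exact sup_le (posPart_mono (hs.1 hx)) inf_le_left
  have hcneg : c ≤ s⁻ := by
    have hs' : s⁺ - s = s⁻ := by
      rw [sub_eq_iff_eq_add, ← sub_eq_iff_eq_add']; exact posPart_sub_negPart s
    exact hs' ▸ le_sub_iff_add_le'.mpr (le_sub_iff_add_le.mp (hs.2 hub))
  have hpos : s⁺ ⊓ d = 0 :=
    le_antisymm ((le_inf inf_le_left hcneg).trans (posPart_inf_negPart_eq_zero s).le) hc0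
  obtain ⟨x, hx⟩ := hS
  have hneg : s⁻ ⊓ d = 0 := inf_eq_zero_of_le (negPart_nonneg s) hd
    ((negPart_anti (hs.1 hx)).trans (negPart_le_abs x)) (h x hx)
  rw [← posPart_add_negPart]
  exact add_inf_eq_zero (posPart_nonneg s) (negPart_nonneg s) hd hpos hneg

lemma IsLUB.inf_eq_zero {S : Set α} {s d : α} (hs : IsLUB S s) (hS : S.Nonempty)
    (hd : 0 ≤ d) (hpos : ∀ x ∈ S, 0 ≤ x) (h : ∀ x ∈ S, x ⊓ d = 0) : s ⊓ d = 0 := by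
  obtain ⟨x, hx⟩ := hS
  have := hs.abs_inf_eq_zero ⟨x, hx⟩ hd fun y hy => by rw [abs_of_nonneg (hpos y hy)]; exact h y hy
  rwa [abs_of_nonneg ((hpos x hx).trans (hs.1 hx))] at this

lemma csSup_add_csSup_le {A B : Set α} {c : α} (hA : A.Nonempty) (hB : B.Nonempty)
    (h : ∀ x ∈ A, ∀ y ∈ B, x + y ≤ c) : sSup A + sSup B ≤ c := by
  have hB' : sSup B ≤ c - sSup A := csSup_le hB fun y hy =>
    le_sub_comm.mp (csSup_le hA fun x hx => le_sub_iff_add_le.mpr (h x hx y hy))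
  exact le_sub_iff_add_le'.mp hB'

lemma le_csInf_add_csInf {A B : Set α} {c : α} (hA : A.Nonempty) (hB : B.Nonempty)
    (h : ∀ x ∈ A, ∀ y ∈ B, c ≤ x + y) : c ≤ sInf A + sInf B := by
  have hA' : c - sInf B ≤ sInf A := le_csInf hA fun x hx =>
    sub_le_comm.mp (le_csInf hB fun y hy => sub_le_iff_le_add'.mpr (h x hx y hy))
  exact sub_le_iff_le_add.mp hA'

end DedekindComplete

section Scalars

variable {α : Type*} [Lattice α] [AddCommGroup α] [Module ℝ α] [PosSMulMono ℝ α]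

lemma abs_smul_le (r : ℝ) (x : α) : |r • x| ≤ |r| • |x| := by
  rcases le_total 0 r with hr | hr
  · rw [abs_of_nonneg hr]
    exact abs_le'.mpr ⟨smul_le_smul_of_nonneg_left (le_abs_self x) hr,
      smul_neg r x ▸ smul_le_smul_of_nonneg_left (neg_le_abs x) hr⟩
  · rw [abs_of_nonpos hr]
    exact abs_le'.mpr ⟨neg_smul_neg r x ▸ smul_le_smul_of_nonneg_left (neg_le_abs x)
      (neg_nonneg.mpr hr), neg_smul r x ▸ smul_le_smul_of_nonneg_left (le_abs_self x)
      (neg_nonneg.mpr hr)⟩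

lemma smul_le_smul_of_le_of_nonneg [AddLeftMono α] {r s : ℝ} {x : α} (h : r ≤ s) (hx : 0 ≤ x) :
    r • x ≤ s • x := by
  have : 0 ≤ (s - r) • x := smul_nonneg (sub_nonneg.mpr h) hx
  rwa [sub_smul, sub_nonneg] at this

end Scalars

/-! ### Components and principal bands -/

namespace RieszPaper

section Components

variable {α : Type*} [Lattice α] [AddCommGroup α] {e p q : α}

lemma zero_mem_comp (he : 0 ≤ e) : (0 : α) ∈ Comp e := by
  simpa [Comp] using he

lemma self_mem_comp (he : 0 ≤ e) : e ∈ Comp e := by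
  simpa [Comp] using he

variable [AddLeftMono α]

lemma comp_sup_eq (hp : p ∈ Comp e) : p ⊔ (e - p) = e := by
  rw [← add_eq_sup_of_inf_eq_zero hp, add_sub_cancel]

lemma comp_le (hp : p ∈ Comp e) : p ≤ e :=
  le_sup_left.trans (comp_sup_eq hp).le

lemma comp_nonneg (hp : p ∈ Comp e) : 0 ≤ p :=
  sub_le_self_iff e |>.mp (le_sup_right.trans (comp_sup_eq hp).le)

lemma inf_mem_comp (hp : p ∈ Comp e) (hq : q ∈ Comp e) : p ⊓ q ∈ Comp e := by
  have h0 : 0 ≤ p ⊓ q := le_inf (comp_nonneg hp) (comp_nonneg hq)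
  have hep : 0 ≤ e - p := sub_nonneg.2 (comp_le hp)
  have heq : 0 ≤ e - q := sub_nonneg.2 (comp_le hq)
  refine le_antisymm ?_ (le_inf h0 (sub_nonneg.2 (inf_le_left.trans (comp_le hp))))
  calc p ⊓ q ⊓ (e - p ⊓ q) = p ⊓ q ⊓ ((e - p) ⊔ (e - q)) := by rw [sub_inf]
    _ ≤ p ⊓ q ⊓ ((e - p) + (e - q)) := inf_le_inf_left _
        (sup_le (le_add_of_nonneg_right heq) (le_add_of_nonneg_left hep))
    _ ≤ p ⊓ q ⊓ (e - p) + p ⊓ q ⊓ (e - q) := inf_add_le_add_inf h0 hep heq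
    _ ≤ p ⊓ (e - p) + q ⊓ (e - q) :=
        add_le_add (inf_le_inf_right _ inf_le_left) (inf_le_inf_right _ inf_le_right)
    _ = 0 := by rw [hp, hq, add_zero]

lemma inf_sub_eq_zero_of_comp (hp : p ∈ Comp e) (hq : q ∈ Comp e) (hqp : q ≤ p) :
    q ⊓ (p - q) = 0 :=
  le_antisymm ((inf_le_inf_left q (sub_le_sub_right (comp_le hp) q)).trans hq.le)
    (le_inf (comp_nonneg hq) (sub_nonneg.2 hqp))

lemma sub_mem_comp_of_le (hp : p ∈ Comp e) (hq : q ∈ Comp e) (hqp : q ≤ p) :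
    p - q ∈ Comp e := by
  have hq0 := comp_nonneg hq
  have hle : (p - q) ⊓ (e - (p - q)) ≤ q := by
    rw [show e - (p - q) = (e - p) + q by abel]
    calc (p - q) ⊓ ((e - p) + q) ≤ p ⊓ ((e - p) + q) := inf_le_inf_right _ (sub_le_self p hq0)
      _ ≤ p ⊓ (e - p) + p ⊓ q := inf_add_le_add_inf (comp_nonneg hp) (sub_nonneg.2 (comp_le hp)) hq0
      _ ≤ q := by rw [hp, zero_add]; exact inf_le_right
  have hle' : (p - q) ⊓ (e - (p - q)) ≤ e - q := inf_le_left.trans (sub_le_sub_right (comp_le hp) q)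
  refine le_antisymm ((le_inf hle hle').trans hq.le) ?_
  exact le_inf (sub_nonneg.2 hqp) (sub_nonneg.2 ((sub_le_self p hq0).trans (comp_le hp)))

lemma add_mem_comp (hp : p ∈ Comp e) (hq : q ∈ Comp e) (hpq : p ⊓ q = 0) :
    p + q ∈ Comp e := by
  have hp0 := comp_nonneg hp
  have hq0 := comp_nonneg hq
  have hc : 0 ≤ e - (p + q) := sub_nonneg.2 <| by
    rw [add_eq_sup_of_inf_eq_zero hpq]; exact sup_le (comp_le hp) (comp_le hq)
  refine le_antisymm ?_ (le_inf (add_nonneg hp0 hq0) hc)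
  calc (p + q) ⊓ (e - (p + q)) = (e - (p + q)) ⊓ (p + q) := inf_comm _ _
    _ ≤ (e - (p + q)) ⊓ p + (e - (p + q)) ⊓ q := inf_add_le_add_inf hc hp0 hq0
    _ ≤ (e - p) ⊓ p + (e - q) ⊓ q := add_le_add
        (inf_le_inf_right _ (sub_le_sub_left (le_add_of_nonneg_right hq0) e))
        (inf_le_inf_right _ (sub_le_sub_left (le_add_of_nonneg_left hp0) e))
    _ = 0 := by rw [inf_comm (e - p) p, inf_comm (e - q) q, hp, hq, add_zero]

lemma comp_eq_inf_add_inf {p₁ p₂ : α} (hp₁ : p₁ ∈ Comp e) (hp₂ : p₂ ∈ Comp e)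
    (hd : p₁ ⊓ p₂ = 0) (hq : q ∈ Comp e) (hle : q ≤ p₁ + p₂) :
    q = q ⊓ p₁ + q ⊓ p₂ := by
  refine le_antisymm ?_ ?_
  · calc q = q ⊓ (p₁ + p₂) := (inf_eq_left.mpr hle).symm
      _ ≤ _ := inf_add_le_add_inf (comp_nonneg hq) (comp_nonneg hp₁) (comp_nonneg hp₂)
  · rw [add_eq_sup_of_inf_eq_zero (inf_eq_zero_of_le_of_le (le_inf (comp_nonneg hq)
      (comp_nonneg hp₁)) (le_inf (comp_nonneg hq) (comp_nonneg hp₂)) inf_le_right inf_le_right hd)]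
    exact sup_le inf_le_left inf_le_left

end Components

section Charges

variable {α : Type*} [Lattice α] [AddCommGroup α] {e : α} {β : Type*} [AddCommGroup β]
  {μ ν : α → β}

namespace IsChargeOn

lemma add (hμ : IsChargeOn e μ) (hν : IsChargeOn e ν) : IsChargeOn e (fun p => μ p + ν p) :=
  ⟨by simp [hμ.1, hν.1], fun p q hp hq hd => by
    simp only [hμ.2 p q hp hq hd, hν.2 p q hp hq hd]; abel⟩

lemma neg (hμ : IsChargeOn e μ) : IsChargeOn e (fun p => -μ p) :=
  ⟨by simp [hμ.1], fun p q hp hq hd => by simp only [hμ.2 p q hp hq hd]; abel⟩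

lemma sub (hμ : IsChargeOn e μ) (hν : IsChargeOn e ν) : IsChargeOn e (fun p => μ p - ν p) := by
  simpa only [sub_eq_add_neg] using hμ.add hν.neg

variable [AddLeftMono α]

lemma apply_eq_add_apply_sub (hμ : IsChargeOn e μ) {p q : α} (hp : p ∈ Comp e)
    (hq : q ∈ Comp e) (hqp : q ≤ p) : μ p = μ q + μ (p - q) := by
  simpa using hμ.2 q (p - q) hq (sub_mem_comp_of_le hp hq hqp) (inf_sub_eq_zero_of_comp hp hq hqp)

lemma mono [PartialOrder β] [AddLeftMono β] (hμ : IsChargeOn e μ)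
    (hpos : ∀ p ∈ Comp e, 0 ≤ μ p) {p q : α} (hp : p ∈ Comp e) (hq : q ∈ Comp e) (hqp : q ≤ p) :
    μ q ≤ μ p := by
  rw [hμ.apply_eq_add_apply_sub hp hq hqp]
  exact le_add_of_nonneg_right (hpos _ (sub_mem_comp_of_le hp hq hqp))

end IsChargeOn

end Charges

section PrincipalBands

variable {α : Type*} [Lattice α] [AddCommGroup α] {f x y : α}

lemma mem_pBand : x ∈ pBand f ↔ ∀ y, |y| ⊓ |f| = 0 → |x| ⊓ |y| = 0 := by
  simp [pBand, disjC]

lemma neg_mem_pBand (hx : x ∈ pBand f) : -x ∈ pBand f := by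
  simpa only [mem_pBand, abs_neg] using hx

variable [AddLeftMono α]

lemma pBand_of_abs_le (h : |x| ≤ |y|) (hy : y ∈ pBand f) : x ∈ pBand f :=
  mem_pBand.2 fun z hz => inf_eq_zero_of_le (abs_nonneg x) (abs_nonneg z) h (mem_pBand.1 hy z hz)

lemma zero_mem_pBand : (0 : α) ∈ pBand f :=
  mem_pBand.2 fun y _ => by rw [abs_zero]; exact inf_eq_left.mpr (abs_nonneg y)

lemma add_mem_pBand (hx : x ∈ pBand f) (hy : y ∈ pBand f) : x + y ∈ pBand f :=
  mem_pBand.2 fun z hz => inf_eq_zero_of_le (abs_nonneg _) (abs_nonneg z) (abs_add_le x y) <|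
    add_inf_eq_zero (abs_nonneg x) (abs_nonneg y) (abs_nonneg z) (mem_pBand.1 hx z hz)
      (mem_pBand.1 hy z hz)

lemma sub_mem_pBand (hx : x ∈ pBand f) (hy : y ∈ pBand f) : x - y ∈ pBand f := by
  rw [sub_eq_add_neg]; exact add_mem_pBand hx (neg_mem_pBand hy)

lemma pBand_mono (h : |f| ≤ |y|) : pBand f ⊆ pBand y := fun x hx =>
  mem_pBand.2 fun z hz => mem_pBand.1 hx z <| by
    rw [inf_comm] at hz ⊢; exact inf_eq_zero_of_le (abs_nonneg f) (abs_nonneg z) h hz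

lemma smul_mem_pBand [Module ℝ α] [PosSMulMono ℝ α] (r : ℝ) (hx : x ∈ pBand f) :
    r • x ∈ pBand f := by
  refine mem_pBand.2 fun z hz => inf_eq_zero_of_le (abs_nonneg _) (abs_nonneg z) ?_
    (nsmul_inf_eq_zero (abs_nonneg x) (abs_nonneg z) (mem_pBand.1 hx z hz) ⌈|r|⌉₊)
  calc |r • x| ≤ |r| • |x| := abs_smul_le r x
    _ ≤ (⌈|r|⌉₊ : ℝ) • |x| := smul_le_smul_of_le_of_nonneg (Nat.le_ceil _) (abs_nonneg x)
    _ = ⌈|r|⌉₊ • |x| := Nat.cast_smul_eq_nsmul ℝ _ _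

lemma mem_pBand_of_isLUB {α : Type*} [ConditionallyCompleteLattice α] [AddCommGroup α]
    [AddLeftMono α] {S : Set α} {s f : α} (hs : IsLUB S s) (hS : S.Nonempty)
    (h : ∀ x ∈ S, x ∈ pBand f) : s ∈ pBand f :=
  mem_pBand.2 fun y hy =>
    hs.abs_inf_eq_zero hS (abs_nonneg y) fun x hx => mem_pBand.1 (h x hx) y hy

end PrincipalBands

section BandProjection

variable {α : Type*} [ConditionallyCompleteLattice α] [AddCommGroup α] {f x : α}

lemma isLUB_projP (f x : α) : IsLUB (projChain f x) (projP f x) := by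
  have hlub : IsLUB (projChain f x) (sSup (projChain f x)) :=
    isLUB_csSup ⟨_, 0, rfl⟩ ⟨x, by rintro y ⟨n, rfl⟩; exact inf_le_left⟩
  rw [projP, dif_pos ⟨_, hlub⟩]
  exact Exists.choose_spec (p := IsLUB (projChain f x)) _

lemma projP_le (f x : α) : projP f x ≤ x :=
  (isLUB_projP f x).2 (by rintro y ⟨n, rfl⟩; exact inf_le_left)

lemma projP_nonneg (hx : 0 ≤ x) : 0 ≤ projP f x :=
  (isLUB_projP f x).1 ⟨0, by rw [zero_nsmul, inf_eq_right.mpr hx]⟩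

variable [AddLeftMono α]

lemma sub_projP_inf_eq_zero (f x : α) : (x - projP f x) ⊓ |f| = 0 := by
  set s := projP f x
  have hs := isLUB_projP f x
  set c := (x - s) ⊓ |f|
  have hc0 : 0 ≤ c := le_inf (sub_nonneg.2 (projP_le f x)) (abs_nonneg f)
  have hstep (n : ℕ) : x ⊓ n • |f| + c ≤ x ⊓ (n + 1) • |f| := by
    refine le_inf ?_ ?_
    · calc x ⊓ n • |f| + c ≤ s + (x - s) := add_le_add (hs.1 ⟨n, rfl⟩) inf_le_left
        _ = x := add_sub_cancel s x
    · exact (add_le_add inf_le_right inf_le_right).trans_eq (succ_nsmul |f| n).symm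
  have hub : s - c ∈ upperBounds (projChain f x) := by
    rintro y ⟨n, rfl⟩
    exact le_sub_iff_add_le.mpr ((hstep n).trans (hs.1 ⟨n + 1, rfl⟩))
  exact le_antisymm ((add_le_iff_nonpos_right s).mp (le_sub_iff_add_le.mp (hs.2 hub))) hc0

lemma inf_sub_projP_eq_zero (hf : 0 ≤ f) (x : α) : f ⊓ (x - projP f x) = 0 := by
  have h := sub_projP_inf_eq_zero f x
  rwa [abs_of_nonneg hf, inf_comm] at h

lemma projP_inf_eq_zero {d : α} (hx : 0 ≤ x) (hd : 0 ≤ d) (hdf : d ⊓ |f| = 0) :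
    projP f x ⊓ d = 0 := by
  refine (isLUB_projP f x).inf_eq_zero ⟨_, 0, rfl⟩ hd ?_ ?_
  · rintro y ⟨n, rfl⟩; exact le_inf hx (nsmul_nonneg (abs_nonneg f) n)
  · rintro y ⟨n, rfl⟩
    refine inf_eq_zero_of_le (le_inf hx (nsmul_nonneg (abs_nonneg f) n)) hd inf_le_right ?_
    exact nsmul_inf_eq_zero (abs_nonneg f) hd (by rwa [inf_comm]) n

lemma projP_mem_comp (hx : 0 ≤ x) : projP f x ∈ Comp x :=
  projP_inf_eq_zero hx (sub_nonneg.2 (projP_le f x)) (sub_projP_inf_eq_zero f x)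

lemma projP_mono {f' : α} (h : |f| ≤ |f'|) (x : α) : projP f x ≤ projP f' x :=
  (isLUB_projP f x).2 <| by
    rintro y ⟨n, rfl⟩
    exact (inf_le_inf_left x (nsmul_le_nsmul_right h n)).trans ((isLUB_projP f' x).1 ⟨n, rfl⟩)

lemma projP_zero_left (hx : 0 ≤ x) : projP 0 x = 0 :=
  le_antisymm ((isLUB_projP 0 x).2 (by rintro y ⟨n, rfl⟩; simp)) (projP_nonneg hx)

end BandProjection

/-! ### `f`-algebras -/

namespace IsFAlgebraMul

section Algebra

variable {G : Type*} [Lattice G] [AddCommGroup G] [Module ℝ G] {u : G} {mul : G → G → G}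

lemma zero_mul (hm : IsFAlgebraMul u mul) (x : G) : mul 0 x = 0 := by
  have h := hm.add_left 0 0 x
  rw [add_zero] at h
  exact left_eq_add.mp h

lemma mul_zero (hm : IsFAlgebraMul u mul) (x : G) : mul x 0 = 0 := by
  rw [hm.comm, hm.zero_mul]

lemma mul_add (hm : IsFAlgebraMul u mul) (x y z : G) : mul x (y + z) = mul x y + mul x z := by
  rw [hm.comm, hm.add_left, hm.comm y, hm.comm z]

lemma sub_mul (hm : IsFAlgebraMul u mul) (x y z : G) : mul (x - y) z = mul x z - mul y z := by
  rw [eq_sub_iff_add_eq, ← hm.add_left, sub_add_cancel]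

lemma mul_sub (hm : IsFAlgebraMul u mul) (x y z : G) : mul x (y - z) = mul x y - mul x z := by
  rw [hm.comm, hm.sub_mul, hm.comm y, hm.comm z]

lemma nsmul_mul (hm : IsFAlgebraMul u mul) (n : ℕ) (x y : G) : mul (n • x) y = n • mul x y := by
  rw [← Nat.cast_smul_eq_nsmul ℝ, hm.smul_left, Nat.cast_smul_eq_nsmul]

lemma mul_smul (hm : IsFAlgebraMul u mul) (r : ℝ) (x y : G) : mul x (r • y) = r • mul x y := by
  rw [hm.comm, hm.smul_left, hm.comm]

lemma mul_nsmul (hm : IsFAlgebraMul u mul) (n : ℕ) (x y : G) : mul x (n • y) = n • mul x y := by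
  rw [hm.comm, hm.nsmul_mul, hm.comm]

lemma mul_one (hm : IsFAlgebraMul u mul) (x : G) : mul x u = x := by
  rw [hm.comm, hm.one_mul]

lemma sub_smul_mul_self (hm : IsFAlgebraMul u mul) (A : G) (r : ℝ) :
    mul (A - r • u) (A - r • u) = mul A A - (2 * r) • A + (r ^ 2) • u := by
  simp only [hm.sub_mul, hm.mul_sub, hm.mul_smul, hm.smul_left, hm.one_mul, hm.mul_one]
  module

variable [AddLeftMono G]

lemma mul_le_mul_of_nonneg_left (hm : IsFAlgebraMul u mul) {x y y' : G} (hx : 0 ≤ x)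
    (h : y ≤ y') : mul x y ≤ mul x y' :=
  sub_nonneg.mp (hm.mul_sub x y' y ▸ hm.mul_nonneg x _ hx (sub_nonneg.2 h))

lemma mul_le_mul_of_nonneg_right (hm : IsFAlgebraMul u mul) {x x' y : G} (hy : 0 ≤ y)
    (h : x ≤ x') : mul x y ≤ mul x' y := by
  rw [hm.comm x, hm.comm x']; exact hm.mul_le_mul_of_nonneg_left hy h

lemma abs_mul_le (hm : IsFAlgebraMul u mul) (x y : G) : |mul x y| ≤ mul |x| |y| := by
  have hy₁ : 0 ≤ |y| - y := sub_nonneg.2 (le_abs_self y)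
  have hy₂ : 0 ≤ |y| + y := by simpa using sub_nonneg.2 (neg_le_abs y)
  have hsub : mul |x| |y| - mul x y = mul x⁺ (|y| - y) + mul x⁻ (|y| + y) := by
    calc mul |x| |y| - mul x y = mul (x⁺ + x⁻) |y| - mul (x⁺ - x⁻) y := by
          rw [posPart_add_negPart, posPart_sub_negPart]
      _ = _ := by simp only [hm.add_left, hm.sub_mul, hm.mul_sub, hm.mul_add]; abel
  have hadd : mul |x| |y| + mul x y = mul x⁺ (|y| + y) + mul x⁻ (|y| - y) := by
    calc mul |x| |y| + mul x y = mul (x⁺ + x⁻) |y| + mul (x⁺ - x⁻) y := by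
          rw [posPart_add_negPart, posPart_sub_negPart]
      _ = _ := by simp only [hm.add_left, hm.sub_mul, hm.mul_sub, hm.mul_add]; abel
  refine abs_le'.mpr ⟨sub_nonneg.mp ?_, ?_⟩
  · rw [hsub]
    exact add_nonneg (hm.mul_nonneg _ _ (posPart_nonneg x) hy₁)
      (hm.mul_nonneg _ _ (negPart_nonneg x) hy₂)
  · rw [← sub_nonneg, sub_neg_eq_add, hadd]
    exact add_nonneg (hm.mul_nonneg _ _ (posPart_nonneg x) hy₂)
      (hm.mul_nonneg _ _ (negPart_nonneg x) hy₁)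

lemma mul_eq_zero_of_inf_eq_zero (hm : IsFAlgebraMul u mul) {x y : G} {n : ℕ} (hx : 0 ≤ x)
    (hy : 0 ≤ y) (hxy : x ⊓ y = 0) (hxu : x ≤ n • u) : mul x y = 0 := by
  have hle : mul x y ≤ n • y := calc
    mul x y ≤ mul (n • u) y := hm.mul_le_mul_of_nonneg_right hy hxu
    _ = n • y := by rw [hm.nsmul_mul, hm.one_mul]
  have hdisj : mul x y ⊓ n • y = 0 := by
    rw [inf_comm]
    exact nsmul_inf_eq_zero hy (hm.mul_nonneg x y hx hy)
      (by rw [inf_comm]; exact hm.disj x y y hxy hy) n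
  rwa [inf_eq_left.mpr hle] at hdisj

lemma mul_eq_of_mem_comp (hm : IsFAlgebraMul u mul) {P y : G} (hP : P ∈ Comp u) (hy : 0 ≤ y)
    (hd : y ⊓ (u - P) = 0) : mul P y = y := by
  have h0 : mul (u - P) y = 0 := hm.mul_eq_zero_of_inf_eq_zero (n := 1)
    (sub_nonneg.2 (comp_le hP)) hy (by rwa [inf_comm]) (by simpa using comp_nonneg hP)
  rwa [hm.sub_mul, hm.one_mul, sub_eq_zero, eq_comm] at h0

lemma mul_self_of_mem_comp (hm : IsFAlgebraMul u mul) {P : G} (hP : P ∈ Comp u) :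
    mul P P = P :=
  hm.mul_eq_of_mem_comp hP (comp_nonneg hP) hP

lemma mul_nonneg_of_inf_negPart_eq_zero (hm : IsFAlgebraMul u mul) {R X : G} (hR : R ∈ Comp u)
    (h : R ⊓ X⁻ = 0) : 0 ≤ mul R X := by
  rw [← posPart_sub_negPart X, hm.mul_sub, hm.mul_eq_zero_of_inf_eq_zero (n := 1)
    (comp_nonneg hR) (negPart_nonneg X) h (by simpa using comp_le hR), sub_zero]
  exact hm.mul_nonneg _ _ (comp_nonneg hR) (posPart_nonneg X)

lemma mul_nonpos_of_inf_posPart_eq_zero (hm : IsFAlgebraMul u mul) {R X : G} (hR : R ∈ Comp u)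
    (h : R ⊓ X⁺ = 0) : mul R X ≤ 0 := by
  rw [← posPart_sub_negPart X, hm.mul_sub, hm.mul_eq_zero_of_inf_eq_zero (n := 1)
    (comp_nonneg hR) (posPart_nonneg X) h (by simpa using comp_le hR), zero_sub, neg_nonpos]
  exact hm.mul_nonneg _ _ (comp_nonneg hR) (negPart_nonneg X)

lemma mul_mul_self_le_of_mem_comp [PosSMulMono ℝ G] (hm : IsFAlgebraMul u mul) {R X : G} {δ : ℝ}
    (hR : R ∈ Comp u) (hδ : 0 ≤ δ) (h0 : 0 ≤ mul R X) (hX : mul R X ≤ δ • R) :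
    mul R (mul X X) ≤ (δ ^ 2) • R := by
  have hRR := hm.mul_self_of_mem_comp hR
  have hsq : mul (mul R X) (mul R X) = mul R (mul X X) := by
    rw [hm.assoc, ← hm.assoc X, hm.comm X R, hm.assoc, ← hm.assoc, hRR]
  calc mul R (mul X X) = mul (mul R X) (mul R X) := hsq.symm
    _ ≤ mul (δ • R) (δ • R) := (hm.mul_le_mul_of_nonneg_left h0 hX).trans
        (hm.mul_le_mul_of_nonneg_right (smul_nonneg hδ (comp_nonneg hR)) hX)
    _ = (δ ^ 2) • R := by rw [hm.smul_left, hm.mul_smul, hRR, smul_smul, sq]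

end Algebra

section DedekindComplete

variable {G : Type*} [ConditionallyCompleteLattice G] [AddCommGroup G] [AddLeftMono G]
  [Module ℝ G] {u : G} {mul : G → G → G}

lemma mul_projP_posPart (hm : IsFAlgebraMul u mul) (hu : 0 ≤ u) (X : G) :
    mul (projP X⁺ u) X = X⁺ := by
  have habs : |X⁺| = X⁺ := abs_of_nonneg (posPart_nonneg X)
  have hneg : mul (projP X⁺ u) X⁻ = 0 := hm.mul_eq_zero_of_inf_eq_zero (n := 1)
    (projP_nonneg hu) (negPart_nonneg X) (projP_inf_eq_zero hu (negPart_nonneg X)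
      (by rw [habs, inf_comm]; exact posPart_inf_negPart_eq_zero X)) (by simpa using projP_le _ u)
  have hpos : mul (projP X⁺ u) X⁺ = X⁺ := hm.mul_eq_of_mem_comp (projP_mem_comp hu)
    (posPart_nonneg X) (inf_sub_projP_eq_zero (posPart_nonneg X) u)
  calc mul (projP X⁺ u) X = mul (projP X⁺ u) (X⁺ - X⁻) := by rw [posPart_sub_negPart]
    _ = X⁺ := by rw [hm.mul_sub, hpos, hneg, sub_zero]

lemma nsmul_posPart_sub_le_mul (hm : IsFAlgebraMul u mul) (hu : 0 ≤ u) (A : G) (k : ℕ) :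
    k • (A - k • u)⁺ ≤ mul (A - k • u)⁺ A := by
  set C := (A - k • u)⁺
  set P := projP C u
  have hCP : mul C P = C := by
    rw [hm.comm]
    exact hm.mul_eq_of_mem_comp (projP_mem_comp hu) (posPart_nonneg _)
      (inf_sub_projP_eq_zero (posPart_nonneg _) u)
  have hPA : mul P A = C + k • P := by
    have h := hm.mul_projP_posPart hu (A - k • u)
    rw [hm.mul_sub, hm.mul_nsmul, hm.mul_one, sub_eq_iff_eq_add] at h
    exact h
  have hCA : mul C A = mul C C + k • C := calc
    mul C A = mul (mul C P) A := by rw [hCP]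
    _ = mul C (mul P A) := hm.assoc C P A
    _ = mul C C + k • C := by rw [hPA, hm.mul_add, hm.mul_nsmul, hCP]
  rw [hCA]
  exact le_add_of_nonneg_left (hm.mul_nonneg C C (posPart_nonneg _) (posPart_nonneg _))

lemma isLUB_mul_inf_nsmul (hm : IsFAlgebraMul u mul) (hu : 0 ≤ u) {A B : G} (hA : 0 ≤ A)
    (hB : 0 ≤ B) : IsLUB (Set.range fun k : ℕ => mul (A ⊓ k • u) B) (mul A B) := by
  refine ⟨by rintro _ ⟨k, rfl⟩; exact hm.mul_le_mul_of_nonneg_right hB inf_le_left, fun v hv => ?_⟩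
  have hk (k : ℕ) : k • (mul A B - v) ≤ mul (mul A A) B := by
    have hCA : (A - k • u)⁺ ≤ A := sup_le (sub_le_self A (nsmul_nonneg hu k)) hA
    calc k • (mul A B - v) ≤ k • mul (A - k • u)⁺ B := by
          refine nsmul_le_nsmul_right ?_ k
          rw [← sub_inf_self_eq_posPart, hm.sub_mul]
          exact sub_le_sub_left (hv ⟨k, rfl⟩) _
      _ = mul (k • (A - k • u)⁺) B := (hm.nsmul_mul k _ B).symm
      _ ≤ mul (mul (A - k • u)⁺ A) B :=
          hm.mul_le_mul_of_nonneg_right hB (hm.nsmul_posPart_sub_le_mul hu A k)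
      _ ≤ mul (mul A A) B :=
          hm.mul_le_mul_of_nonneg_right hB (hm.mul_le_mul_of_nonneg_right hA hCA)
  exact sub_nonpos.mp (nonpos_of_forall_nsmul_le hk)

lemma mul_posPart_negPart (hm : IsFAlgebraMul u mul) (hu : 0 ≤ u) (x : G) :
    mul x⁺ x⁻ = 0 := by
  refine le_antisymm ((hm.isLUB_mul_inf_nsmul hu (posPart_nonneg x) (negPart_nonneg x)).2 ?_)
    (hm.mul_nonneg _ _ (posPart_nonneg x) (negPart_nonneg x))
  rintro _ ⟨k, rfl⟩
  have h0 : 0 ≤ x⁺ ⊓ k • u := le_inf (posPart_nonneg x) (nsmul_nonneg hu k)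
  exact (hm.mul_eq_zero_of_inf_eq_zero h0 (negPart_nonneg x) (inf_eq_zero_of_le h0
    (negPart_nonneg x) inf_le_left (posPart_inf_negPart_eq_zero x)) inf_le_right).le

lemma mul_self_eq (hm : IsFAlgebraMul u mul) (hu : 0 ≤ u) (x : G) :
    mul x x = mul x⁺ x⁺ + mul x⁻ x⁻ := by
  have h := hm.mul_posPart_negPart hu x
  calc mul x x = mul (x⁺ - x⁻) (x⁺ - x⁻) := by rw [posPart_sub_negPart]
    _ = _ := by simp only [hm.sub_mul, hm.mul_sub, h, hm.comm x⁻ x⁺]; abel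

lemma mul_abs_self (hm : IsFAlgebraMul u mul) (hu : 0 ≤ u) (x : G) :
    mul |x| |x| = mul x x := by
  have h := hm.mul_posPart_negPart hu x
  calc mul |x| |x| = mul (x⁺ + x⁻) (x⁺ + x⁻) := by rw [posPart_add_negPart]
    _ = mul x x := by
        simp only [hm.add_left, hm.mul_add, h, hm.comm x⁻ x⁺, hm.mul_self_eq hu x]; abel

lemma mul_self_nonneg (hm : IsFAlgebraMul u mul) (hu : 0 ≤ u) (x : G) : 0 ≤ mul x x := by
  rw [hm.mul_self_eq hu]
  exact add_nonneg (hm.mul_nonneg _ _ (posPart_nonneg x) (posPart_nonneg x))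
    (hm.mul_nonneg _ _ (negPart_nonneg x) (negPart_nonneg x))

end DedekindComplete

section Squares

variable {G : Type*} [ConditionallyCompleteLattice G] [AddCommGroup G] [AddLeftMono G]
  [Module ℝ G] [PosSMulMono ℝ G] {u : G} {mul : G → G → G} {A v : G}

/-- On the component `P r - P (r + δ)` of the unit, where `P s := projP (A - s u)⁺ u`, one has
`r ≤ A ≤ r + δ`, hence `A² - v ≤ (A - r)² ≤ δ²`. -/
lemma mul_projP_sub_projP_mul_self_sub_le (hm : IsFAlgebraMul u mul) (hu : 0 ≤ u)
    (hv : ∀ r : ℝ, 0 ≤ r → (2 * r) • A - (r ^ 2) • u ≤ v) {r δ : ℝ} (hr : 0 ≤ r) (hδ : 0 ≤ δ) :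
    mul (projP (A - r • u)⁺ u - projP (A - (r + δ) • u)⁺ u) (mul A A - v) ≤
      (δ ^ 2) • (projP (A - r • u)⁺ u - projP (A - (r + δ) • u)⁺ u) := by
  set P₀ := projP (A - r • u)⁺ u
  set P₁ := projP (A - (r + δ) • u)⁺ u
  have hP : P₁ ≤ P₀ := by
    refine projP_mono ?_ u
    rw [abs_of_nonneg (posPart_nonneg _), abs_of_nonneg (posPart_nonneg _)]
    exact posPart_mono (sub_le_sub_left (smul_le_smul_of_le_of_nonneg (by linarith) hu) A)
  have hR : P₀ - P₁ ∈ Comp u := sub_mem_comp_of_le (projP_mem_comp hu) (projP_mem_comp hu) hP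
  have hlow : 0 ≤ mul (P₀ - P₁) (A - r • u) := by
    refine hm.mul_nonneg_of_inf_negPart_eq_zero hR <| inf_eq_zero_of_le (comp_nonneg hR)
      (negPart_nonneg _) (sub_le_self _ (projP_nonneg hu)) <| projP_inf_eq_zero hu
      (negPart_nonneg _) ?_
    rw [abs_of_nonneg (posPart_nonneg _), inf_comm]
    exact posPart_inf_negPart_eq_zero _
  have hhigh : mul (P₀ - P₁) (A - (r + δ) • u) ≤ 0 := by
    refine hm.mul_nonpos_of_inf_posPart_eq_zero hR <| inf_eq_zero_of_le (comp_nonneg hR)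
      (posPart_nonneg _) (sub_le_sub_right (projP_le _ u) P₁) ?_
    rw [inf_comm]
    exact inf_sub_projP_eq_zero (posPart_nonneg _) u
  have hδR : mul (P₀ - P₁) (A - r • u) ≤ δ • (P₀ - P₁) := by
    rw [show A - r • u = (A - (r + δ) • u) + δ • u by module, hm.mul_add, hm.mul_smul,
      hm.mul_one]
    exact add_le_of_nonpos_left hhigh
  have hsq : mul A A - v ≤ mul (A - r • u) (A - r • u) := by
    rw [hm.sub_smul_mul_self]
    calc mul A A - v ≤ mul A A - ((2 * r) • A - (r ^ 2) • u) := sub_le_sub_left (hv r hr) _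
      _ = _ := by abel
  calc mul (P₀ - P₁) (mul A A - v) ≤ mul (P₀ - P₁) (mul (A - r • u) (A - r • u)) :=
        hm.mul_le_mul_of_nonneg_left (comp_nonneg hR) hsq
    _ ≤ (δ ^ 2) • (P₀ - P₁) := hm.mul_mul_self_le_of_mem_comp hR hδ hlow hδR

lemma mul_sub_projP_mul_self_sub_le (hm : IsFAlgebraMul u mul) (hu : 0 ≤ u) (hA : 0 ≤ A)
    (hv : ∀ r : ℝ, 0 ≤ r → (2 * r) • A - (r ^ 2) • u ≤ v) {δ : ℝ} (hδ : 0 ≤ δ) (n : ℕ) :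
    mul (u - projP (A - (n * δ) • u)⁺ u) (mul A A - v) ≤
      (δ ^ 2) • (u - projP (A - (n * δ) • u)⁺ u) := by
  induction n with
  | zero =>
    simp only [Nat.cast_zero, MulZeroClass.zero_mul, zero_smul, sub_zero, posPart_eq_self.mpr hA]
    have hQ : mul (u - projP A u) A = 0 := hm.mul_eq_zero_of_inf_eq_zero (n := 1)
      (sub_nonneg.2 (projP_le A u)) hA (by simpa [abs_of_nonneg hA] using sub_projP_inf_eq_zero A u)
      (by simpa using sub_le_self u (projP_nonneg hu))
    have hv0 : 0 ≤ v := by simpa using hv 0 le_rfl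
    rw [hm.mul_sub, ← hm.assoc, hQ, hm.zero_mul, zero_sub]
    exact (neg_nonpos.mpr (hm.mul_nonneg _ _ (sub_nonneg.2 (projP_le A u)) hv0)).trans
      (smul_nonneg (sq_nonneg δ) (sub_nonneg.2 (projP_le A u)))
  | succ n ih =>
    rw [show ((n + 1 : ℕ) : ℝ) * δ = n * δ + δ by push_cast; ring]
    have hpiece := hm.mul_projP_sub_projP_mul_self_sub_le hu hv (by positivity : (0 : ℝ) ≤ n * δ) hδ
    set P₀ := projP (A - (n * δ) • u)⁺ u
    set P₁ := projP (A - (n * δ + δ) • u)⁺ u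
    calc mul (u - P₁) (mul A A - v)
        = mul (u - P₀) (mul A A - v) + mul (P₀ - P₁) (mul A A - v) := by
          rw [← hm.add_left, sub_add_sub_cancel]
      _ ≤ (δ ^ 2) • (u - P₀) + (δ ^ 2) • (P₀ - P₁) := add_le_add ih hpiece
      _ = (δ ^ 2) • (u - P₁) := by rw [← smul_add, sub_add_sub_cancel]

lemma mul_self_le_of_le_nsmul (hm : IsFAlgebraMul u mul) (hu : 0 ≤ u) (hA : 0 ≤ A) {N : ℕ}
    (hAN : A ≤ N • u) (hv : ∀ r : ℝ, 0 ≤ r → (2 * r) • A - (r ^ 2) • u ≤ v) :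
    mul A A ≤ v := by
  refine sub_nonpos.mp (nonpos_of_forall_le_smul hu fun ε hε => ?_)
  have hδ : 0 < √ε := Real.sqrt_pos.2 hε
  obtain ⟨n, hn⟩ := exists_nat_ge ((N : ℝ) / √ε)
  have hP : projP (A - (n * √ε) • u)⁺ u = 0 := by
    refine (congrArg (projP · u) (posPart_eq_zero.mpr (sub_nonpos.mpr ?_))).trans
      (projP_zero_left hu)
    calc A ≤ (N : ℝ) • u := by rwa [Nat.cast_smul_eq_nsmul]
      _ ≤ (n * √ε) • u := smul_le_smul_of_le_of_nonneg ((div_le_iff₀ hδ).mp hn) hu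
  have h := hm.mul_sub_projP_mul_self_sub_le hu hA hv hδ.le n
  rwa [hP, sub_zero, hm.one_mul, Real.sq_sqrt hε.le] at h

lemma isLUB_mul_self (hm : IsFAlgebraMul u mul) (hu : 0 ≤ u) (hA : 0 ≤ A) :
    IsLUB ((fun r : ℝ => (2 * r) • A - (r ^ 2) • u) '' Set.Ici 0) (mul A A) := by
  refine ⟨?_, fun v hv => ?_⟩
  · rintro _ ⟨r, -, rfl⟩
    have h := hm.mul_self_nonneg hu (A - r • u)
    rw [hm.sub_smul_mul_self] at h
    exact sub_nonneg.mp (by convert h using 1; module)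
  have hAk (k : ℕ) : 0 ≤ A ⊓ k • u := le_inf hA (nsmul_nonneg hu k)
  have hk (k : ℕ) : mul (A ⊓ k • u) (A ⊓ k • u) ≤ v :=
    hm.mul_self_le_of_le_nsmul hu (hAk k) inf_le_right fun r hr =>
      (sub_le_sub_right (smul_le_smul_of_nonneg_left inf_le_left (by positivity)) _).trans
        (hv ⟨r, hr, rfl⟩)
  have hjk (j k : ℕ) : mul (A ⊓ j • u) (A ⊓ k • u) ≤ v := by
    have hmono {i : ℕ} (hi : i ≤ max j k) : A ⊓ i • u ≤ A ⊓ (max j k) • u :=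
      inf_le_inf_left A (nsmul_le_nsmul_left hu hi)
    exact ((hm.mul_le_mul_of_nonneg_right (hAk k) (hmono (le_max_left j k))).trans
      (hm.mul_le_mul_of_nonneg_left (hAk _) (hmono (le_max_right j k)))).trans (hk _)
  refine (hm.isLUB_mul_inf_nsmul hu hA hA).2 ?_
  rintro _ ⟨k, rfl⟩
  show mul (A ⊓ k • u) A ≤ v
  rw [hm.comm]
  exact (hm.isLUB_mul_inf_nsmul hu hA (hAk k)).2 (by rintro _ ⟨j, rfl⟩; exact hjk j k)

end Squares

end IsFAlgebraMul

/-! ### Charges on the components of `e` -/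

section SplitSums

variable {α : Type*} [Lattice α] [AddCommGroup α] {e : α} {F : Type*} [AddCommGroup F]
  {μ ν : α → F} {p : α}

def splitSums (e : α) (μ ν : α → F) (p : α) : Set F :=
  {v | ∃ q, q ∈ Comp e ∧ q ≤ p ∧ v = μ q + ν (p - q)}

lemma splitSums_nonempty (hp : p ∈ Comp e) : (splitSums e μ ν p).Nonempty :=
  ⟨_, p, hp, le_rfl, rfl⟩

section

variable [ConditionallyCompleteLattice F]

lemma chSupAt_eq : chSupAt e μ ν p = sSup (splitSums e μ ν p) := rfl

lemma chInfAt_eq : chInfAt e μ ν p = sInf (splitSums e μ ν p) := rfl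

lemma chargeAbs_eq : chargeAbs e μ p = sSup (splitSums e μ (fun x => -μ x) p) := by
  simp only [chargeAbs, splitSums, sub_eq_add_neg]

lemma chargePos_eq : chargePos e μ p = sSup (splitSums e μ (fun _ => 0) p) := by
  simp only [chargePos, splitSums, add_zero]

end

variable [AddLeftMono α]

lemma splitSums_zero (hμ : μ 0 = 0) (hν : ν 0 = 0) (he : 0 ≤ e) : splitSums e μ ν 0 = {0} := by
  ext v
  constructor
  · rintro ⟨q, hq, hq0, rfl⟩
    rw [le_antisymm hq0 (comp_nonneg hq), hμ, sub_zero, hν, add_zero]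
    rfl
  · rintro rfl
    exact ⟨0, zero_mem_comp he, le_rfl, by rw [hμ, sub_zero, hν, add_zero]⟩

lemma exists_add_of_mem_splitSums (hμ : IsChargeOn e μ) (hν : IsChargeOn e ν) {p₁ p₂ : α}
    (hp₁ : p₁ ∈ Comp e) (hp₂ : p₂ ∈ Comp e) (hd : p₁ ⊓ p₂ = 0) {v : F}
    (hv : v ∈ splitSums e μ ν (p₁ + p₂)) :
    ∃ v₁ ∈ splitSums e μ ν p₁, ∃ v₂ ∈ splitSums e μ ν p₂, v = v₁ + v₂ := by
  obtain ⟨q, hq, hqp, rfl⟩ := hv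
  have hq₁ : q ⊓ p₁ ∈ Comp e := inf_mem_comp hq hp₁
  have hq₂ : q ⊓ p₂ ∈ Comp e := inf_mem_comp hq hp₂
  have hr₁ : p₁ - q ⊓ p₁ ∈ Comp e := sub_mem_comp_of_le hp₁ hq₁ inf_le_right
  have hr₂ : p₂ - q ⊓ p₂ ∈ Comp e := sub_mem_comp_of_le hp₂ hq₂ inf_le_right
  have hq := comp_eq_inf_add_inf hp₁ hp₂ hd hq hqp
  have hμq : μ q = μ (q ⊓ p₁) + μ (q ⊓ p₂) := by
    conv_lhs => rw [hq]
    exact hμ.2 _ _ hq₁ hq₂ (inf_eq_zero_of_le_of_le (comp_nonneg hq₁) (comp_nonneg hq₂)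
      inf_le_right inf_le_right hd)
  have hνr : ν (p₁ + p₂ - q) = ν (p₁ - q ⊓ p₁) + ν (p₂ - q ⊓ p₂) := by
    rw [show p₁ + p₂ - q = (p₁ - q ⊓ p₁) + (p₂ - q ⊓ p₂) by nth_rewrite 1 [hq]; abel]
    exact hν.2 _ _ hr₁ hr₂ (inf_eq_zero_of_le_of_le (comp_nonneg hr₁) (comp_nonneg hr₂)
      (sub_le_self _ (comp_nonneg hq₁)) (sub_le_self _ (comp_nonneg hq₂)) hd)
  refine ⟨_, ⟨q ⊓ p₁, hq₁, inf_le_right, rfl⟩, _, ⟨q ⊓ p₂, hq₂, inf_le_right, rfl⟩, ?_⟩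
  rw [hμq, hνr]
  abel

lemma add_mem_splitSums_add (hμ : IsChargeOn e μ) (hν : IsChargeOn e ν) {p₁ p₂ : α}
    (hp₁ : p₁ ∈ Comp e) (hp₂ : p₂ ∈ Comp e) (hd : p₁ ⊓ p₂ = 0) {v₁ v₂ : F}
    (hv₁ : v₁ ∈ splitSums e μ ν p₁) (hv₂ : v₂ ∈ splitSums e μ ν p₂) :
    v₁ + v₂ ∈ splitSums e μ ν (p₁ + p₂) := by
  obtain ⟨q₁, hq₁, hqp₁, rfl⟩ := hv₁
  obtain ⟨q₂, hq₂, hqp₂, rfl⟩ := hv₂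
  have hr₁ : p₁ - q₁ ∈ Comp e := sub_mem_comp_of_le hp₁ hq₁ hqp₁
  have hr₂ : p₂ - q₂ ∈ Comp e := sub_mem_comp_of_le hp₂ hq₂ hqp₂
  have hdq : q₁ ⊓ q₂ = 0 :=
    inf_eq_zero_of_le_of_le (comp_nonneg hq₁) (comp_nonneg hq₂) hqp₁ hqp₂ hd
  have hdr : (p₁ - q₁) ⊓ (p₂ - q₂) = 0 := inf_eq_zero_of_le_of_le (comp_nonneg hr₁)
    (comp_nonneg hr₂) (sub_le_self _ (comp_nonneg hq₁)) (sub_le_self _ (comp_nonneg hq₂)) hd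
  refine ⟨q₁ + q₂, add_mem_comp hq₁ hq₂ hdq, add_le_add hqp₁ hqp₂, ?_⟩
  rw [hμ.2 _ _ hq₁ hq₂ hdq, show p₁ + p₂ - (q₁ + q₂) = (p₁ - q₁) + (p₂ - q₂) by abel,
    hν.2 _ _ hr₁ hr₂ hdr]
  abel

variable [ConditionallyCompleteLattice F] [AddLeftMono F]

lemma bddAbove_splitSums {a b : F} (hμ : ∀ q ∈ Comp e, μ q ≤ a) (hν : ∀ q ∈ Comp e, ν q ≤ b)
    (hp : p ∈ Comp e) : BddAbove (splitSums e μ ν p) :=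
  ⟨a + b, by
    rintro _ ⟨q, hq, hqp, rfl⟩
    exact add_le_add (hμ q hq) (hν _ (sub_mem_comp_of_le hp hq hqp))⟩

lemma bddBelow_splitSums {a b : F} (hμ : ∀ q ∈ Comp e, a ≤ μ q) (hν : ∀ q ∈ Comp e, b ≤ ν q)
    (hp : p ∈ Comp e) : BddBelow (splitSums e μ ν p) :=
  ⟨a + b, by
    rintro _ ⟨q, hq, hqp, rfl⟩
    exact add_le_add (hμ q hq) (hν _ (sub_mem_comp_of_le hp hq hqp))⟩

lemma csSup_splitSums_add (hμ : IsChargeOn e μ) (hν : IsChargeOn e ν) {a b : F}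
    (hμa : ∀ q ∈ Comp e, μ q ≤ a) (hνb : ∀ q ∈ Comp e, ν q ≤ b) {p₁ p₂ : α}
    (hp₁ : p₁ ∈ Comp e) (hp₂ : p₂ ∈ Comp e) (hd : p₁ ⊓ p₂ = 0) :
    sSup (splitSums e μ ν (p₁ + p₂)) = sSup (splitSums e μ ν p₁) + sSup (splitSums e μ ν p₂) := by
  have hp := add_mem_comp hp₁ hp₂ hd
  refine le_antisymm (csSup_le (splitSums_nonempty hp) fun v hv => ?_) ?_
  · obtain ⟨v₁, hv₁, v₂, hv₂, rfl⟩ := exists_add_of_mem_splitSums hμ hν hp₁ hp₂ hd hv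
    exact add_le_add (le_csSup (bddAbove_splitSums hμa hνb hp₁) hv₁)
      (le_csSup (bddAbove_splitSums hμa hνb hp₂) hv₂)
  · exact csSup_add_csSup_le (splitSums_nonempty hp₁) (splitSums_nonempty hp₂) fun v₁ hv₁ v₂ hv₂ =>
      le_csSup (bddAbove_splitSums hμa hνb hp) (add_mem_splitSums_add hμ hν hp₁ hp₂ hd hv₁ hv₂)

lemma csInf_splitSums_add (hμ : IsChargeOn e μ) (hν : IsChargeOn e ν) {a b : F}
    (hμa : ∀ q ∈ Comp e, a ≤ μ q) (hνb : ∀ q ∈ Comp e, b ≤ ν q) {p₁ p₂ : α}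
    (hp₁ : p₁ ∈ Comp e) (hp₂ : p₂ ∈ Comp e) (hd : p₁ ⊓ p₂ = 0) :
    sInf (splitSums e μ ν (p₁ + p₂)) = sInf (splitSums e μ ν p₁) + sInf (splitSums e μ ν p₂) := by
  have hp := add_mem_comp hp₁ hp₂ hd
  refine le_antisymm ?_ (le_csInf (splitSums_nonempty hp) fun v hv => ?_)
  · exact le_csInf_add_csInf (splitSums_nonempty hp₁) (splitSums_nonempty hp₂) fun v₁ hv₁ v₂ hv₂ =>
      csInf_le (bddBelow_splitSums hμa hνb hp) (add_mem_splitSums_add hμ hν hp₁ hp₂ hd hv₁ hv₂)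
  · obtain ⟨v₁, hv₁, v₂, hv₂, rfl⟩ := exists_add_of_mem_splitSums hμ hν hp₁ hp₂ hd hv
    exact add_le_add (csInf_le (bddBelow_splitSums hμa hνb hp₁) hv₁)
      (csInf_le (bddBelow_splitSums hμa hνb hp₂) hv₂)

lemma IsChargeOn.chSupAt (hμ : IsChargeOn e μ) (hν : IsChargeOn e ν) {a b : F}
    (hμa : ∀ q ∈ Comp e, μ q ≤ a) (hνb : ∀ q ∈ Comp e, ν q ≤ b) (he : 0 ≤ e) :
    IsChargeOn e (chSupAt e μ ν) :=
  ⟨by rw [chSupAt_eq, splitSums_zero hμ.1 hν.1 he, csSup_singleton], fun _ _ hp hq hd =>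
    csSup_splitSums_add hμ hν hμa hνb hp hq hd⟩

lemma IsChargeOn.chInfAt (hμ : IsChargeOn e μ) (hν : IsChargeOn e ν) {a b : F}
    (hμa : ∀ q ∈ Comp e, a ≤ μ q) (hνb : ∀ q ∈ Comp e, b ≤ ν q) (he : 0 ≤ e) :
    IsChargeOn e (chInfAt e μ ν) :=
  ⟨by rw [chInfAt_eq, splitSums_zero hμ.1 hν.1 he, csInf_singleton], fun _ _ hp hq hd =>
    csInf_splitSums_add hμ hν hμa hνb hp hq hd⟩

end SplitSums

section ChargeLattice

variable {α : Type*} [Lattice α] [AddCommGroup α] {e : α} {F : Type*}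
  [ConditionallyCompleteLattice F] {μ : α → F} {p : α}

lemma chargePos_le {g : F} (hg : ∀ q ∈ Comp e, μ q ≤ g) (hp : p ∈ Comp e) :
    chargePos e μ p ≤ g :=
  csSup_le ⟨_, p, hp, le_rfl, rfl⟩ (by rintro _ ⟨q, hq, -, rfl⟩; exact hg q hq)

variable [AddCommGroup F]


lemma OrdBddOn.neg (hμ : OrdBddOn e μ) : OrdBddOn e (fun x => -μ x) := by
  obtain ⟨g, hg0, hg⟩ := hμ
  exact ⟨g, hg0, fun p hp => (abs_neg (μ p)).trans_le (hg p hp)⟩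

lemma neg_mem_baSet (hμ : μ ∈ baSet e) : (fun x => -μ x) ∈ baSet e :=
  ⟨hμ.1.neg, hμ.2.neg⟩

lemma isLUB_chargePos (hμ : OrdBddOn e μ) (hp : p ∈ Comp e) :
    IsLUB {v | ∃ q, q ∈ Comp e ∧ q ≤ p ∧ v = μ q} (chargePos e μ p) := by
  obtain ⟨g, -, hg⟩ := hμ
  exact isLUB_csSup ⟨_, p, hp, le_rfl, rfl⟩
    ⟨g, by rintro _ ⟨q, hq, -, rfl⟩; exact (le_abs_self _).trans (hg q hq)⟩

lemma le_chargePos (hμ : OrdBddOn e μ) {q : α} (hp : p ∈ Comp e) (hq : q ∈ Comp e)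
    (hqp : q ≤ p) : μ q ≤ chargePos e μ p :=
  (isLUB_chargePos hμ hp).1 ⟨q, hq, hqp, rfl⟩

lemma chargePos_nonneg [AddLeftMono α] (hμ : μ ∈ baSet e) (he : 0 ≤ e) (hp : p ∈ Comp e) :
    0 ≤ chargePos e μ p :=
  hμ.1.1 ▸ le_chargePos hμ.2 hp (zero_mem_comp he) (comp_nonneg hp)

variable [AddLeftMono α] [AddLeftMono F]

lemma isLUB_chargeAbs (hμ : OrdBddOn e μ) (hp : p ∈ Comp e) :
    IsLUB (splitSums e μ (fun x => -μ x) p) (chargeAbs e μ p) := by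
  obtain ⟨g, -, hg⟩ := hμ
  rw [chargeAbs_eq]
  exact isLUB_csSup (splitSums_nonempty hp) (bddAbove_splitSums
    (fun q hq => (le_abs_self _).trans (hg q hq)) (fun q hq => (neg_le_abs _).trans (hg q hq)) hp)

lemma abs_le_chargeAbs (hμ : μ ∈ baSet e) (he : 0 ≤ e) (hp : p ∈ Comp e) :
    |μ p| ≤ chargeAbs e μ p := by
  have h := isLUB_chargeAbs hμ.2 hp
  exact abs_le'.mpr ⟨h.1 ⟨p, hp, le_rfl, by simp [hμ.1.1]⟩,
    h.1 ⟨0, zero_mem_comp he, comp_nonneg hp, by simp [hμ.1.1]⟩⟩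

lemma chargeAbs_nonneg (hμ : μ ∈ baSet e) (he : 0 ≤ e) (hp : p ∈ Comp e) :
    0 ≤ chargeAbs e μ p :=
  (abs_nonneg _).trans (abs_le_chargeAbs hμ he hp)

lemma chargeAbs_le_add {g : F} (hg : ∀ q ∈ Comp e, |μ q| ≤ g) (hp : p ∈ Comp e) :
    chargeAbs e μ p ≤ g + g := by
  rw [chargeAbs_eq]
  refine csSup_le (splitSums_nonempty hp) ?_
  rintro _ ⟨q, hq, hqp, rfl⟩
  exact add_le_add ((le_abs_self _).trans (hg q hq))
    ((neg_le_abs _).trans (hg _ (sub_mem_comp_of_le hp hq hqp)))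

lemma isChargeOn_chargeAbs (hμ : μ ∈ baSet e) (he : 0 ≤ e) : IsChargeOn e (chargeAbs e μ) := by
  obtain ⟨g, -, hg⟩ := hμ.2
  have h := hμ.1.chSupAt hμ.1.neg (fun q hq => (le_abs_self _).trans (hg q hq))
    (fun q hq => (neg_le_abs _).trans (hg q hq)) he
  have heq : chargeAbs e μ = chSupAt e μ (fun x => -μ x) := funext fun _ => chargeAbs_eq
  rwa [heq]

lemma chargeAbs_le_add_of_eq_sub {σ₁ σ₂ : α → F} (h₁ : IsChargeOn e σ₁) (h₂ : IsChargeOn e σ₂)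
    (h₁0 : ∀ q ∈ Comp e, 0 ≤ σ₁ q) (h₂0 : ∀ q ∈ Comp e, 0 ≤ σ₂ q)
    (hμ : ∀ q ∈ Comp e, μ q = σ₁ q - σ₂ q) (hp : p ∈ Comp e) :
    chargeAbs e μ p ≤ σ₁ p + σ₂ p := by
  rw [chargeAbs_eq]
  refine csSup_le (splitSums_nonempty hp) ?_
  rintro _ ⟨q, hq, hqp, rfl⟩
  have hr := sub_mem_comp_of_le hp hq hqp
  dsimp only
  rw [hμ q hq, hμ _ hr]
  calc σ₁ q - σ₂ q + -(σ₁ (p - q) - σ₂ (p - q))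
      = σ₁ q + σ₂ (p - q) - (σ₂ q + σ₁ (p - q)) := by abel
    _ ≤ σ₁ q + σ₂ (p - q) := sub_le_self _ (add_nonneg (h₂0 q hq) (h₁0 _ hr))
    _ ≤ σ₁ p + σ₂ p := add_le_add (h₁.mono h₁0 hp hq hqp)
        (h₂.mono h₂0 hp hr (sub_le_self _ (comp_nonneg hq)))

lemma isChargeOn_chargePos (hμ : μ ∈ baSet e) (he : 0 ≤ e) : IsChargeOn e (chargePos e μ) := by
  obtain ⟨g, hg0, hg⟩ := hμ.2
  have h := hμ.1.chSupAt (ν := fun _ => 0) ⟨rfl, fun _ _ _ _ _ => (add_zero 0).symm⟩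
    (fun q hq => (le_abs_self _).trans (hg q hq)) (fun _ _ => le_rfl) he
  have heq : chargePos e μ = chSupAt e μ (fun _ => 0) := funext fun _ => chargePos_eq
  rwa [heq]

lemma chargePos_sub_chargeNeg (hμ : μ ∈ baSet e) (hp : p ∈ Comp e) :
    chargePos e μ p - chargeNeg e μ p = μ p := by
  have hneg : chargeNeg e μ p = chargePos e μ p - μ p := by
    refine le_antisymm ((isLUB_chargePos hμ.2.neg hp).2 ?_) ?_
    · rintro _ ⟨q, hq, hqp, rfl⟩
      have hr := sub_mem_comp_of_le hp hq hqp
      calc -μ q = μ (p - q) - μ p := by rw [hμ.1.apply_eq_add_apply_sub hp hq hqp]; abel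
        _ ≤ chargePos e μ p - μ p :=
          sub_le_sub_right (le_chargePos hμ.2 hp hr (sub_le_self _ (comp_nonneg hq))) _
    · refine sub_le_iff_le_add.mpr ((isLUB_chargePos hμ.2 hp).2 ?_)
      rintro _ ⟨q, hq, hqp, rfl⟩
      have hr := sub_mem_comp_of_le hp hq hqp
      calc μ q = -μ (p - q) + μ p := by rw [hμ.1.apply_eq_add_apply_sub hp hq hqp]; abel
        _ ≤ chargeNeg e μ p + μ p :=
          add_le_add_left (le_chargePos hμ.2.neg hp hr (sub_le_self _ (comp_nonneg hq))) _
  rw [hneg, sub_sub_cancel]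

end ChargeLattice

section PositiveCharges

variable {α : Type*} [Lattice α] [AddCommGroup α] [AddLeftMono α] {e : α}
  {F : Type*} [ConditionallyCompleteLattice F] [AddCommGroup F] [AddLeftMono F]
  {A A' B : α → F} {p : α}

lemma chInfAt_nonneg (hA : ∀ q ∈ Comp e, 0 ≤ A q) (hB : ∀ q ∈ Comp e, 0 ≤ B q)
    (hp : p ∈ Comp e) : 0 ≤ chInfAt e A B p :=
  le_csInf (splitSums_nonempty hp) <| by
    rintro _ ⟨q, hq, hqp, rfl⟩
    exact add_nonneg (hA q hq) (hB _ (sub_mem_comp_of_le hp hq hqp))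

lemma chInfAt_mono (hAA' : ∀ q ∈ Comp e, A' q ≤ A q) (hA' : ∀ q ∈ Comp e, 0 ≤ A' q)
    (hB : ∀ q ∈ Comp e, 0 ≤ B q) (hp : p ∈ Comp e) : chInfAt e A' B p ≤ chInfAt e A B p :=
  le_csInf (splitSums_nonempty hp) <| by
    rintro _ ⟨q, hq, hqp, rfl⟩
    exact (csInf_le (bddBelow_splitSums hA' hB hp) ⟨q, hq, hqp, rfl⟩).trans
      (add_le_add (hAA' q hq) le_rfl)

lemma chInfAt_le_left (hA : A 0 = 0) (hA0 : ∀ q ∈ Comp e, 0 ≤ A q) (hB0 : ∀ q ∈ Comp e, 0 ≤ B q)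
    (he : 0 ≤ e) (hp : p ∈ Comp e) : chInfAt e A B p ≤ B p :=
  csInf_le (bddBelow_splitSums hA0 hB0 hp) ⟨0, zero_mem_comp he, comp_nonneg hp, by simp [hA]⟩

lemma chInfAt_le_right (hB : B 0 = 0) (hA0 : ∀ q ∈ Comp e, 0 ≤ A q)
    (hB0 : ∀ q ∈ Comp e, 0 ≤ B q) (hp : p ∈ Comp e) : chInfAt e A B p ≤ A p :=
  csInf_le (bddBelow_splitSums hA0 hB0 hp) ⟨p, hp, le_rfl, by simp [hB]⟩

lemma IsChargeOn.apply_sub_inf_le (hB : IsChargeOn e B) (hB0 : ∀ q ∈ Comp e, 0 ≤ B q)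
    {q q' : α} (hp : p ∈ Comp e) (hq : q ∈ Comp e) (hq' : q' ∈ Comp e) (hqp : q ≤ p)
    (hq'p : q' ≤ p) : B (p - q ⊓ q') ≤ B (p - q) + B (p - q') := by
  have hqq' := inf_mem_comp hq hq'
  have hle : q - q ⊓ q' ≤ p - q' := by
    rw [sub_le_sub_iff, ← inf_add_sup q q', add_comm (q ⊓ q')]
    exact add_le_add (sup_le hqp hq'p) le_rfl
  rw [hB.apply_eq_add_apply_sub (sub_mem_comp_of_le hp hqq' (inf_le_left.trans hqp))
    (sub_mem_comp_of_le hp hq hqp) (sub_le_sub_left inf_le_left p),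
    show p - q ⊓ q' - (p - q) = q - q ⊓ q' by abel]
  exact add_le_add le_rfl (hB.mono hB0 (sub_mem_comp_of_le hp hq' hq'p)
    (sub_mem_comp_of_le hq hqq' inf_le_left) hle)

lemma chInfAt_add_le {A₁ A₂ : α → F} (hA₁ : IsChargeOn e A₁) (hA₂ : IsChargeOn e A₂)
    (hB : IsChargeOn e B) (hA₁0 : ∀ q ∈ Comp e, 0 ≤ A₁ q) (hA₂0 : ∀ q ∈ Comp e, 0 ≤ A₂ q)
    (hB0 : ∀ q ∈ Comp e, 0 ≤ B q) (hp : p ∈ Comp e) :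
    chInfAt e (fun x => A₁ x + A₂ x) B p ≤ chInfAt e A₁ B p + chInfAt e A₂ B p := by
  refine le_csInf_add_csInf (splitSums_nonempty hp) (splitSums_nonempty hp) ?_
  rintro _ ⟨q, hq, hqp, rfl⟩ _ ⟨q', hq', hq'p, rfl⟩
  have hqq' := inf_mem_comp hq hq'
  refine (csInf_le (bddBelow_splitSums (fun r hr => add_nonneg (hA₁0 r hr) (hA₂0 r hr)) hB0 hp)
    ⟨q ⊓ q', hqq', inf_le_left.trans hqp, rfl⟩).trans ?_
  calc A₁ (q ⊓ q') + A₂ (q ⊓ q') + B (p - q ⊓ q')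
      ≤ A₁ q + A₂ q' + (B (p - q) + B (p - q')) :=
        add_le_add (add_le_add (hA₁.mono hA₁0 hq hqq' inf_le_left)
          (hA₂.mono hA₂0 hq' hqq' inf_le_right)) (hB.apply_sub_inf_le hB0 hp hq hq' hqp hq'p)
    _ = A₁ q + B (p - q) + (A₂ q' + B (p - q')) := by abel

end PositiveCharges

section PointwiseSup

variable {α : Type*} {F : Type*} [ConditionallyCompleteLattice F] {S : Set (α → F)}

def pointwiseSup (S : Set (α → F)) : α → F := fun x => sSup ((fun μ => μ x) '' S)

lemma isLUB_pointwiseSup (hne : S.Nonempty) {p : α} (hbdd : BddAbove ((fun μ => μ p) '' S)) :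
    IsLUB ((fun μ => μ p) '' S) (pointwiseSup S p) :=
  isLUB_csSup (hne.image _) hbdd

variable [Lattice α] [AddCommGroup α] [AddLeftMono α] [AddCommGroup F] [AddLeftMono F] {e : α}

lemma isChargeOn_pointwiseSup (hne : S.Nonempty) (hdir : DirectedOn (baLe e) S)
    (hS : ∀ μ ∈ S, IsChargeOn e μ)
    (hbdd : ∀ p ∈ Comp e, BddAbove ((fun μ => μ p) '' S)) (he : 0 ≤ e) :
    IsChargeOn e (pointwiseSup S) := by
  obtain ⟨μ₀, hμ₀⟩ := hne
  have hlub {p : α} (hp : p ∈ Comp e) := isLUB_pointwiseSup ⟨μ₀, hμ₀⟩ (hbdd p hp)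
  refine ⟨le_antisymm (csSup_le ⟨_, μ₀, hμ₀, rfl⟩ ?_) ((hlub (zero_mem_comp he)).1
    ⟨μ₀, hμ₀, (hS μ₀ hμ₀).1⟩), fun p q hp hq hd => le_antisymm ?_ ?_⟩
  · rintro _ ⟨μ, hμ, rfl⟩; exact (hS μ hμ).1.le
  · refine (hlub (add_mem_comp hp hq hd)).2 ?_
    rintro _ ⟨μ, hμ, rfl⟩
    show μ (p + q) ≤ _
    rw [(hS μ hμ).2 p q hp hq hd]
    exact add_le_add ((hlub hp).1 ⟨μ, hμ, rfl⟩) ((hlub hq).1 ⟨μ, hμ, rfl⟩)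
  · refine csSup_add_csSup_le ⟨_, μ₀, hμ₀, rfl⟩ ⟨_, μ₀, hμ₀, rfl⟩ ?_
    rintro _ ⟨μ, hμ, rfl⟩ _ ⟨ν, hν, rfl⟩
    obtain ⟨ρ, hρ, hμρ, hνρ⟩ := hdir μ hμ ν hν
    calc μ p + ν q ≤ ρ p + ρ q := add_le_add (hμρ p hp) (hνρ q hq)
      _ = ρ (p + q) := ((hS ρ hρ).2 p q hp hq hd).symm
      _ ≤ pointwiseSup S (p + q) := (hlub (add_mem_comp hp hq hd)).1 ⟨ρ, hρ, rfl⟩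

end PointwiseSup

/-! ### `R(T)` and `ba(T)` -/

namespace CRT

variable {E : Type u} {G : Type v}
variable [ConditionallyCompleteLattice E] [AddCommGroup E] [Module ℝ E]
  [CovariantClass E E (· + ·) (· ≤ ·)] [PosSMulMono ℝ E]
variable [ConditionallyCompleteLattice G] [AddCommGroup G] [Module ℝ G]
  [CovariantClass G G (· + ·) (· ≤ ·)] [PosSMulMono ℝ G]
variable (C : CRT E G) {μ ν π : E → E}

lemma e_nonneg : 0 ≤ C.e := C.triple.weakUnit.1.le

lemma j_e_nonneg : 0 ≤ C.j C.e := (C.compl.bipos _).mpr C.e_nonneg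

lemma j_le_iff {x y : E} : C.j x ≤ C.j y ↔ x ≤ y := by
  rw [← sub_nonneg, ← map_sub, C.compl.bipos, sub_nonneg]

lemma j_injective : Function.Injective C.j := fun _ _ h =>
  le_antisymm (C.j_le_iff.mp h.le) (C.j_le_iff.mp h.ge)

lemma j_inf (x y : E) : C.j (x ⊓ y) = C.j x ⊓ C.j y := by
  rw [← neg_neg (x ⊓ y), neg_inf, map_neg, C.compl.latHom, map_neg, map_neg, neg_sup, neg_neg,
    neg_neg]

lemma j_abs (x : E) : C.j |x| = |C.j x| := by
  rw [abs, abs, C.compl.latHom, map_neg]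

lemma T_mono {x y : E} (h : x ≤ y) : C.T x ≤ C.T y :=
  sub_nonneg.mp (map_sub C.T y x ▸ C.triple.pos _ (sub_nonneg.2 h))

lemma zero_mem_R : (0 : E) ∈ C.R := ⟨0, map_zero _⟩

lemma e_mem_R : C.e ∈ C.R := ⟨C.e, C.triple.unitFix⟩

lemma add_mem_R {a b : E} (ha : a ∈ C.R) (hb : b ∈ C.R) : a + b ∈ C.R := by
  obtain ⟨x, rfl⟩ := ha; obtain ⟨y, rfl⟩ := hb; exact ⟨x + y, map_add _ _ _⟩

lemma smul_mem_R (r : ℝ) {a : E} (ha : a ∈ C.R) : r • a ∈ C.R := by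
  obtain ⟨x, rfl⟩ := ha; exact ⟨r • x, map_smul _ _ _⟩

lemma neg_mem_R {a : E} (ha : a ∈ C.R) : -a ∈ C.R := by
  simpa using C.smul_mem_R (-1) ha

lemma sub_mem_R {a b : E} (ha : a ∈ C.R) (hb : b ∈ C.R) : a - b ∈ C.R := by
  rw [sub_eq_add_neg]; exact C.add_mem_R ha (C.neg_mem_R hb)

lemma abs_mem_R {a : E} (ha : a ∈ C.R) : |a| ∈ C.R :=
  C.triple.rangeSupClosed a (-a) ha (C.neg_mem_R ha)

lemma csSup_mem_R {A : Set E} (hA : A ⊆ C.R) (hne : A.Nonempty) (hbdd : BddAbove A) :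
    sSup A ∈ C.R :=
  C.triple.rangeDedekind A hA hne hbdd

lemma csInf_mem_R {A : Set E} (hA : A ⊆ C.R) (hne : A.Nonempty) (hbdd : BddBelow A) :
    sInf A ∈ C.R := by
  have h : sInf A = -sSup (-A) :=
    (isGLB_csInf hne hbdd).unique (by simpa using (isLUB_csSup hne.neg hbdd.neg).neg)
  rw [h]
  refine C.neg_mem_R (C.csSup_mem_R (fun x hx => ?_) hne.neg hbdd.neg)
  simpa using C.neg_mem_R (hA (Set.mem_neg.mp hx))

lemma j_sm {g : E} (hg : g ∈ C.R) (f : E) : C.j (C.sm g f) = C.mul (C.j g) (C.j f) :=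
  Function.invFun_eq (C.mulClosed g f ⟨|g|, C.abs_mem_R hg, abs_nonneg g, le_rfl⟩)

lemma sm_add {g : E} (hg : g ∈ C.R) (x y : E) : C.sm g (x + y) = C.sm g x + C.sm g y :=
  C.j_injective <| by simp only [map_add, C.j_sm hg, C.falg.mul_add]

lemma sm_zero {g : E} (hg : g ∈ C.R) : C.sm g 0 = 0 :=
  C.j_injective <| by rw [C.j_sm hg, map_zero, C.falg.mul_zero]

lemma abs_sm_le {g x y : E} (hg : g ∈ C.R) (hxy : |x| ≤ y) : |C.sm g x| ≤ C.sm |g| y := by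
  rw [← C.j_le_iff, C.j_abs, C.j_sm hg, C.j_sm (C.abs_mem_R hg), C.j_abs]
  exact (C.falg.abs_mul_le _ _).trans (C.falg.mul_le_mul_of_nonneg_left (abs_nonneg _)
    (C.j_abs x ▸ C.j_le_iff.mpr hxy))

lemma sm_mem_pBand {g x f : E} (hg : g ∈ C.R) (hx : x ∈ pBand f) : C.sm g x ∈ pBand f := by
  refine mem_pBand.2 fun y hy => C.j_injective ?_
  have hxy : |C.j x| ⊓ |C.j y| = 0 := by
    rw [← C.j_abs, ← C.j_abs, ← C.j_inf, mem_pBand.1 hx y hy, map_zero]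
  rw [map_zero, C.j_inf, C.j_abs, C.j_abs, C.j_sm hg]
  refine inf_eq_zero_of_le (abs_nonneg _) (abs_nonneg _) ((C.falg.abs_mul_le _ _).trans_eq
    (C.falg.comm _ _)) ?_
  exact C.falg.disj _ _ _ hxy (abs_nonneg _)

lemma sm_self_mem_R_of_nonneg {a : E} (ha : a ∈ C.R) (ha0 : 0 ≤ a) : C.sm a a ∈ C.R := by
  set S := (fun r : ℝ => (2 * r) • a - (r ^ 2) • C.e) '' Set.Ici 0
  have hjS : C.j '' S = (fun r : ℝ => (2 * r) • C.j a - (r ^ 2) • C.j C.e) '' Set.Ici 0 := by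
    simp only [S, Set.image_image, map_sub, map_smul]
  have hG := C.falg.isLUB_mul_self C.j_e_nonneg ((C.compl.bipos a).mpr ha0)
  rw [← hjS, ← C.j_sm ha] at hG
  have hS : IsLUB S (C.sm a a) :=
    ⟨fun x hx => C.j_le_iff.mp (hG.1 ⟨x, hx, rfl⟩), fun b hb => C.j_le_iff.mp <|
      hG.2 <| by rintro _ ⟨x, hx, rfl⟩; exact C.j_le_iff.mpr (hb hx)⟩
  rw [← hS.csSup_eq ⟨_, 0, Set.self_mem_Ici, rfl⟩]
  refine C.csSup_mem_R ?_ ⟨_, 0, Set.self_mem_Ici, rfl⟩ hS.bddAbove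
  rintro _ ⟨r, -, rfl⟩
  exact C.sub_mem_R (C.smul_mem_R _ ha) (C.smul_mem_R _ C.e_mem_R)

lemma sm_self_mem_R {a : E} (ha : a ∈ C.R) : C.sm a a ∈ C.R := by
  have h : C.sm a a = C.sm |a| |a| := C.j_injective <| by
    rw [C.j_sm ha, C.j_sm (C.abs_mem_R ha), C.j_abs, C.falg.mul_abs_self C.j_e_nonneg]
  exact h ▸ C.sm_self_mem_R_of_nonneg (C.abs_mem_R ha) (abs_nonneg a)

lemma sm_mem_R {a b : E} (ha : a ∈ C.R) (hb : b ∈ C.R) : C.sm a b ∈ C.R := by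
  have hab := C.add_mem_R ha hb
  have h : C.sm a b = (2⁻¹ : ℝ) • (C.sm (a + b) (a + b) - C.sm a a - C.sm b b) :=
    C.j_injective <| by
      simp only [map_smul, map_sub, map_add, C.j_sm ha, C.j_sm hb, C.j_sm hab, C.falg.add_left,
        C.falg.mul_add, C.falg.comm (C.j b) (C.j a)]
      module
  rw [h]
  exact C.smul_mem_R _ (C.sub_mem_R (C.sub_mem_R (C.sm_self_mem_R hab) (C.sm_self_mem_R ha))
    (C.sm_self_mem_R hb))

lemma mem_baSet_of_mem_baR (hμ : μ ∈ C.baR C.e) : μ ∈ baSet C.e := by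
  obtain ⟨g, -, hg0, hg⟩ := hμ.2.2
  exact ⟨hμ.1, g, hg0, hg⟩

lemma baR_bound (hμ : μ ∈ C.baR C.e) :
    ∃ g ∈ C.R, 0 ≤ g ∧ ∀ p ∈ Comp C.e, μ p ≤ g ∧ -μ p ≤ g := by
  obtain ⟨g, hgR, hg0, hg⟩ := hμ.2.2
  exact ⟨g, hgR, hg0, fun p hp => abs_le'.mp (hg p hp)⟩

lemma pBand_T_mono {p q : E} (hp : p ∈ Comp C.e) (hq : q ∈ Comp C.e) (hqp : q ≤ p) :
    pBand (C.T q) ⊆ pBand (C.T p) := by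
  refine pBand_mono ?_
  rw [abs_of_nonneg (C.triple.pos q (comp_nonneg hq)),
    abs_of_nonneg (C.triple.pos p (comp_nonneg hp))]
  exact C.T_mono hqp

lemma splitSums_subset_R (hμ : ∀ q ∈ Comp C.e, μ q ∈ C.R) (hν : ∀ q ∈ Comp C.e, ν q ∈ C.R)
    {p : E} (hp : p ∈ Comp C.e) : splitSums C.e μ ν p ⊆ C.R := by
  rintro _ ⟨q, hq, hqp, rfl⟩
  exact C.add_mem_R (hμ q hq) (hν _ (sub_mem_comp_of_le hp hq hqp))

lemma splitSums_subset_pBand (hμ : ∀ q ∈ Comp C.e, μ q ∈ pBand (C.T q))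
    (hν : ∀ q ∈ Comp C.e, ν q ∈ pBand (C.T q)) {p : E} (hp : p ∈ Comp C.e) :
    splitSums C.e μ ν p ⊆ pBand (C.T p) := by
  rintro _ ⟨q, hq, hqp, rfl⟩
  have hr := sub_mem_comp_of_le hp hq hqp
  exact add_mem_pBand (C.pBand_T_mono hp hq hqp (hμ q hq))
    (C.pBand_T_mono hp hr (sub_le_self _ (comp_nonneg hq)) (hν _ hr))

lemma neg_mem_baR (hμ : μ ∈ C.baR C.e) : (fun x => -μ x) ∈ C.baR C.e := by
  obtain ⟨g, hgR, hg0, hg⟩ := hμ.2.2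
  exact ⟨hμ.1.neg, fun p hp => C.neg_mem_R (hμ.2.1 p hp), g, hgR, hg0,
    fun p hp => (abs_neg (μ p)).trans_le (hg p hp)⟩

lemma sub_mem_baR (hμ : μ ∈ C.baR C.e) (hν : ν ∈ C.baR C.e) :
    (fun x => μ x - ν x) ∈ C.baR C.e := by
  obtain ⟨gμ, hgμR, hgμ0, hgμ⟩ := hμ.2.2
  obtain ⟨gν, hgνR, hgν0, hgν⟩ := hν.2.2
  exact ⟨hμ.1.sub hν.1, fun p hp => C.sub_mem_R (hμ.2.1 p hp) (hν.2.1 p hp), gμ + gν,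
    C.add_mem_R hgμR hgνR, add_nonneg hgμ0 hgν0,
    fun p hp => (abs_sub_le_abs_add_abs _ _).trans (add_le_add (hgμ p hp) (hgν p hp))⟩

lemma zero_mem_baT : (fun _ => (0 : E)) ∈ C.baT :=
  ⟨⟨⟨rfl, fun _ _ _ _ _ => (add_zero 0).symm⟩, fun _ _ => C.zero_mem_R, 0, C.zero_mem_R, le_rfl,
    fun _ _ => abs_zero.le⟩, fun _ _ => zero_mem_pBand⟩

lemma add_mem_baT (hμ : μ ∈ C.baT) (hν : ν ∈ C.baT) : (fun x => μ x + ν x) ∈ C.baT := by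
  have h := C.sub_mem_baR hμ.1 (C.neg_mem_baR hν.1)
  simp only [sub_neg_eq_add] at h
  exact ⟨h, fun p hp => add_mem_pBand (hμ.2 p hp) (hν.2 p hp)⟩

lemma sub_mem_baT (hμ : μ ∈ C.baT) (hν : ν ∈ C.baT) : (fun x => μ x - ν x) ∈ C.baT :=
  ⟨C.sub_mem_baR hμ.1 hν.1, fun p hp => sub_mem_pBand (hμ.2 p hp) (hν.2 p hp)⟩

lemma smul_mem_baT (hμ : μ ∈ C.baT) (r : ℝ) : (fun x => r • μ x) ∈ C.baT := by
  obtain ⟨g, hgR, hg0, hg⟩ := hμ.1.2.2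
  refine ⟨⟨⟨by simp [hμ.1.1.1], fun p q hp hq hd => by simp [hμ.1.1.2 p q hp hq hd]⟩,
    fun p hp => C.smul_mem_R r (hμ.1.2.1 p hp), |r| • g, C.smul_mem_R _ hgR,
    smul_nonneg (abs_nonneg r) hg0, fun p hp => ?_⟩, fun p hp => smul_mem_pBand r (hμ.2 p hp)⟩
  exact (abs_smul_le r (μ p)).trans (smul_le_smul_of_nonneg_left (hg p hp) (abs_nonneg r))

lemma sm_mem_baT (hμ : μ ∈ C.baT) {g : E} (hg : g ∈ C.R) :
    (fun x => C.sm g (μ x)) ∈ C.baT := by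
  obtain ⟨b, hbR, hb0, hb⟩ := hμ.1.2.2
  refine ⟨⟨⟨by simp [hμ.1.1.1, C.sm_zero hg], fun p q hp hq hd => by
    simp [hμ.1.1.2 p q hp hq hd, C.sm_add hg]⟩, fun p hp => C.sm_mem_R hg (hμ.1.2.1 p hp),
    C.sm |g| b, C.sm_mem_R (C.abs_mem_R hg) hbR, ?_, fun p hp => C.abs_sm_le hg (hb p hp)⟩,
    fun p hp => C.sm_mem_pBand hg (hμ.2 p hp)⟩
  have := C.abs_sm_le hg (hb 0 (zero_mem_comp C.e_nonneg))
  exact (abs_nonneg _).trans this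

lemma chargeAbs_mem_baT (hν : ν ∈ C.baT) : chargeAbs C.e ν ∈ C.baT := by
  obtain ⟨g, hgR, hg0, hg⟩ := hν.1.2.2
  have hνS := C.mem_baSet_of_mem_baR hν.1
  have hlub {p : E} (hp : p ∈ Comp C.e) := isLUB_chargeAbs hνS.2 hp
  refine ⟨⟨isChargeOn_chargeAbs hνS C.e_nonneg, fun p hp => ?_, g + g, C.add_mem_R hgR hgR,
    add_nonneg hg0 hg0, fun p hp => ?_⟩, fun p hp => mem_pBand_of_isLUB (hlub hp)
      (splitSums_nonempty hp) (C.splitSums_subset_pBand hν.2 (fun q hq => neg_mem_pBand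
        (hν.2 q hq)) hp)⟩
  · rw [chargeAbs_eq]
    exact C.csSup_mem_R (C.splitSums_subset_R hν.1.2.1 (fun q hq => C.neg_mem_R (hν.1.2.1 q hq))
      hp) (splitSums_nonempty hp) (hlub hp).bddAbove
  · rw [abs_of_nonneg (chargeAbs_nonneg hνS C.e_nonneg hp)]
    exact chargeAbs_le_add hg hp

lemma chargePos_mem_baR (hμ : μ ∈ C.baR C.e) : chargePos C.e μ ∈ C.baR C.e := by
  obtain ⟨g, hgR, hg0, hg⟩ := C.baR_bound hμ
  have hμS := C.mem_baSet_of_mem_baR hμ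
  refine ⟨isChargeOn_chargePos hμS C.e_nonneg, fun p hp => ?_, g, hgR, hg0, fun p hp => ?_⟩
  · refine C.csSup_mem_R ?_ ⟨_, p, hp, le_rfl, rfl⟩ (isLUB_chargePos hμS.2 hp).bddAbove
    rintro _ ⟨q, hq, -, rfl⟩
    exact hμ.2.1 q hq
  · rw [abs_of_nonneg (chargePos_nonneg hμS C.e_nonneg hp)]
    exact chargePos_le (fun q hq => (hg q hq).1) hp

lemma mem_baT_of_chargeAbs_le (hμ : μ ∈ C.baR C.e) (hν : ν ∈ C.baT)
    (h : ∀ p ∈ Comp C.e, chargeAbs C.e μ p ≤ chargeAbs C.e ν p) : μ ∈ C.baT := by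
  refine ⟨hμ, fun p hp => pBand_of_abs_le ?_ ((C.chargeAbs_mem_baT hν).2 p hp)⟩
  rw [abs_of_nonneg (chargeAbs_nonneg (C.mem_baSet_of_mem_baR hν.1) C.e_nonneg hp)]
  exact (abs_le_chargeAbs (C.mem_baSet_of_mem_baR hμ) C.e_nonneg hp).trans (h p hp)

lemma pointwiseSup_mem_baT {S : Set (E → E)} (hS : S ⊆ C.baT) (hne : S.Nonempty)
    (hdir : DirectedOn (baLe C.e) S) {η : E → E} (hη : η ∈ C.baR C.e)
    (hub : ∀ μ ∈ S, baLe C.e μ η) : pointwiseSup S ∈ C.baT := by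
  obtain ⟨μ₀, hμ₀⟩ := hne
  have hbdd {p : E} (hp : p ∈ Comp C.e) : BddAbove ((fun μ => μ p) '' S) :=
    ⟨η p, by rintro _ ⟨μ, hμ, rfl⟩; exact hub μ hμ p hp⟩
  have hlub {p : E} (hp : p ∈ Comp C.e) := isLUB_pointwiseSup ⟨μ₀, hμ₀⟩ (hbdd hp)
  obtain ⟨gη, hgηR, hgη0, hgη⟩ := C.baR_bound hη
  obtain ⟨g₀, hg₀R, hg₀0, hg₀⟩ := C.baR_bound (hS hμ₀).1
  refine ⟨⟨isChargeOn_pointwiseSup ⟨μ₀, hμ₀⟩ hdir (fun μ hμ => (hS hμ).1.1) (fun _ => hbdd)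
    C.e_nonneg, fun p hp => C.csSup_mem_R ?_ ⟨_, μ₀, hμ₀, rfl⟩ (hbdd hp), gη ⊔ g₀,
    C.triple.rangeSupClosed _ _ hgηR hg₀R, hgη0.trans le_sup_left, fun p hp => abs_le'.mpr
    ⟨?_, ?_⟩⟩, fun p hp => mem_pBand_of_isLUB (hlub hp) ⟨_, μ₀, hμ₀, rfl⟩ ?_⟩
  · rintro _ ⟨μ, hμ, rfl⟩; exact (hS hμ).1.2.1 p hp
  · exact ((hlub hp).2 fun _ ⟨μ, hμ, h⟩ => h ▸ hub μ hμ p hp).trans ((hgη p hp).1.trans le_sup_left)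
  · exact (neg_le_neg_iff.mpr ((hlub hp).1 ⟨μ₀, hμ₀, rfl⟩)).trans ((hg₀ p hp).2.trans le_sup_right)
  · rintro _ ⟨μ, hμ, rfl⟩; exact (hS hμ).2 p hp

lemma mem_baT_of_isLUB_baR {S : Set (E → E)} (hS : S ⊆ C.baT) (hne : S.Nonempty)
    (hdir : DirectedOn (baLe C.e) S) {η : E → E} (hη : η ∈ C.baR C.e)
    (hub : ∀ μ ∈ S, baLe C.e μ η)
    (hmin : ∀ ξ ∈ C.baR C.e, (∀ μ ∈ S, baLe C.e μ ξ) → baLe C.e η ξ) : η ∈ C.baT := by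
  have hξ := C.pointwiseSup_mem_baT hS hne hdir hη hub
  have hbdd {p : E} (hp : p ∈ Comp C.e) : BddAbove ((fun μ => μ p) '' S) :=
    ⟨η p, by rintro _ ⟨μ, hμ, rfl⟩; exact hub μ hμ p hp⟩
  have hlub {p : E} (hp : p ∈ Comp C.e) := isLUB_pointwiseSup hne (hbdd hp)
  have hηξ : ∀ p ∈ Comp C.e, η p = pointwiseSup S p := fun p hp => le_antisymm
    (hmin _ hξ.1 (fun μ hμ q hq => (hlub hq).1 ⟨μ, hμ, rfl⟩) p hp)
    ((hlub hp).2 (by rintro _ ⟨μ, hμ, rfl⟩; exact hub μ hμ p hp))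
  exact ⟨hη, fun p hp => hηξ p hp ▸ hξ.2 p hp⟩

def acMinorants (π : E → E) : Set (E → E) :=
  {ν | ν ∈ C.baT ∧ ∀ p ∈ Comp C.e, 0 ≤ ν p ∧ ν p ≤ π p}

def acPart (π : E → E) : E → E := pointwiseSup (C.acMinorants π)

def singularPart (π : E → E) : E → E := fun x => π x - C.acPart π x

lemma zero_mem_acMinorants (hπ0 : ∀ p ∈ Comp C.e, 0 ≤ π p) :
    (fun _ => 0) ∈ C.acMinorants π :=
  ⟨C.zero_mem_baT, fun p hp => ⟨le_rfl, hπ0 p hp⟩⟩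

lemma directedOn_acMinorants (hπ : π ∈ C.baR C.e) : DirectedOn (baLe C.e) (C.acMinorants π) := by
  rintro ν₁ ⟨h₁, hb₁⟩ ν₂ ⟨h₂, hb₂⟩
  obtain ⟨g, hgR, hg0, hg⟩ := C.baR_bound hπ
  have hν₁g (q : E) (hq : q ∈ Comp C.e) : ν₁ q ≤ g := (hb₁ q hq).2.trans (hg q hq).1
  have hν₂g (q : E) (hq : q ∈ Comp C.e) : ν₂ q ≤ g := (hb₂ q hq).2.trans (hg q hq).1
  have hlub {p : E} (hp : p ∈ Comp C.e) : IsLUB (splitSums C.e ν₁ ν₂ p) (chSupAt C.e ν₁ ν₂ p) :=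
    isLUB_csSup (splitSums_nonempty hp) (bddAbove_splitSums hν₁g hν₂g hp)
  have hle₁ : baLe C.e ν₁ (chSupAt C.e ν₁ ν₂) := fun p hp =>
    (hlub hp).1 ⟨p, hp, le_rfl, by simp [h₂.1.1.1]⟩
  have hle₂ : baLe C.e ν₂ (chSupAt C.e ν₁ ν₂) := fun p hp =>
    (hlub hp).1 ⟨0, zero_mem_comp C.e_nonneg, comp_nonneg hp, by simp [h₁.1.1.1]⟩
  have hleπ (p : E) (hp : p ∈ Comp C.e) : chSupAt C.e ν₁ ν₂ p ≤ π p := (hlub hp).2 <| by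
    rintro _ ⟨q, hq, hqp, rfl⟩
    rw [hπ.1.apply_eq_add_apply_sub hp hq hqp]
    exact add_le_add (hb₁ q hq).2 (hb₂ _ (sub_mem_comp_of_le hp hq hqp)).2
  have h0 (p : E) (hp : p ∈ Comp C.e) : 0 ≤ chSupAt C.e ν₁ ν₂ p := (hb₁ p hp).1.trans (hle₁ p hp)
  have hT : chSupAt C.e ν₁ ν₂ ∈ C.baT := by
    refine ⟨⟨h₁.1.1.chSupAt h₂.1.1 hν₁g hν₂g C.e_nonneg, fun p hp => ?_, g, hgR, hg0,
      fun p hp => ?_⟩, fun p hp => mem_pBand_of_isLUB (hlub hp) (splitSums_nonempty hp)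
        (C.splitSums_subset_pBand h₁.2 h₂.2 hp)⟩
    · exact C.csSup_mem_R (C.splitSums_subset_R h₁.1.2.1 h₂.1.2.1 hp) (splitSums_nonempty hp)
        (hlub hp).bddAbove
    · rw [abs_of_nonneg (h0 p hp)]
      exact (hleπ p hp).trans (hg p hp).1
  exact ⟨_, ⟨hT, fun p hp => ⟨h0 p hp, hleπ p hp⟩⟩, hle₁, hle₂⟩

lemma acPart_mem_acMinorants (hπ : π ∈ C.baR C.e) (hπ0 : ∀ p ∈ Comp C.e, 0 ≤ π p) :
    C.acPart π ∈ C.acMinorants π := by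
  have hne : (C.acMinorants π).Nonempty := ⟨_, C.zero_mem_acMinorants hπ0⟩
  have hlub {p : E} (hp : p ∈ Comp C.e) := isLUB_pointwiseSup hne
    (p := p) ⟨π p, by rintro _ ⟨ν, hν, rfl⟩; exact (hν.2 p hp).2⟩
  refine ⟨C.pointwiseSup_mem_baT (fun ν hν => hν.1) hne (C.directedOn_acMinorants hπ) hπ
    (fun ν hν p hp => (hν.2 p hp).2), fun p hp => ⟨?_, ?_⟩⟩
  · exact (hlub hp).1 ⟨_, C.zero_mem_acMinorants hπ0, rfl⟩
  · exact (hlub hp).2 (by rintro _ ⟨ν, hν, rfl⟩; exact (hν.2 p hp).2)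

lemma le_acPart (hν : ν ∈ C.acMinorants π) {p : E} (hp : p ∈ Comp C.e) :
    ν p ≤ C.acPart π p :=
  (isLUB_pointwiseSup ⟨ν, hν⟩ ⟨π p, by rintro _ ⟨ν, hν, rfl⟩; exact (hν.2 p hp).2⟩).1 ⟨ν, hν, rfl⟩

lemma singularPart_mem_baR (hπ : π ∈ C.baR C.e) (hπ0 : ∀ p ∈ Comp C.e, 0 ≤ π p) :
    C.singularPart π ∈ C.baR C.e :=
  C.sub_mem_baR hπ (C.acPart_mem_acMinorants hπ hπ0).1.1

lemma singularPart_nonneg (hπ : π ∈ C.baR C.e) (hπ0 : ∀ p ∈ Comp C.e, 0 ≤ π p) {p : E}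
    (hp : p ∈ Comp C.e) : 0 ≤ C.singularPart π p :=
  sub_nonneg.2 ((C.acPart_mem_acMinorants hπ hπ0).2 p hp).2

/-- With `ρ := acPart π`, the charge `inf(π - ρ, B)` is absolutely continuous and below
`π - ρ`, so `ρ + inf(π - ρ, B)` is again an absolutely continuous minorant of `π`. -/
lemma chInfAt_singularPart_eq_zero (hπ : π ∈ C.baR C.e) (hπ0 : ∀ p ∈ Comp C.e, 0 ≤ π p)
    {B : E → E} (hB : B ∈ C.baT) (hB0 : ∀ p ∈ Comp C.e, 0 ≤ B p) {p : E} (hp : p ∈ Comp C.e) :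
    chInfAt C.e (C.singularPart π) B p = 0 := by
  have hσ := C.singularPart_mem_baR hπ hπ0
  have hσ0 (q : E) (hq : q ∈ Comp C.e) := C.singularPart_nonneg hπ hπ0 hq
  obtain ⟨g, hgR, hg0, hg⟩ := hB.1.2.2
  set τ := chInfAt C.e (C.singularPart π) B
  have hτ0 (q : E) (hq : q ∈ Comp C.e) : 0 ≤ τ q := chInfAt_nonneg hσ0 hB0 hq
  have hτB (q : E) (hq : q ∈ Comp C.e) : τ q ≤ B q := chInfAt_le_left hσ.1.1 hσ0 hB0 C.e_nonneg hq
  have hτT : τ ∈ C.baT := by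
    refine ⟨⟨hσ.1.chInfAt hB.1.1 hσ0 hB0 C.e_nonneg, fun q hq => ?_, g, hgR, hg0, fun q hq => ?_⟩,
      fun q hq => pBand_of_abs_le ?_ (hB.2 q hq)⟩
    · exact C.csInf_mem_R (C.splitSums_subset_R hσ.2.1 hB.1.2.1 hq) (splitSums_nonempty hq)
        (bddBelow_splitSums hσ0 hB0 hq)
    · exact (abs_of_nonneg (hτ0 q hq)).trans_le ((hτB q hq).trans ((le_abs_self _).trans (hg q hq)))
    · rw [abs_of_nonneg (hτ0 q hq), abs_of_nonneg (hB0 q hq)]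
      exact hτB q hq
  have hmem : (fun x => C.acPart π x + τ x) ∈ C.acMinorants π := by
    have hρ := C.acPart_mem_acMinorants hπ hπ0
    refine ⟨C.add_mem_baT hρ.1 hτT, fun q hq => ⟨add_nonneg (hρ.2 q hq).1 (hτ0 q hq), ?_⟩⟩
    calc C.acPart π q + τ q ≤ C.acPart π q + C.singularPart π q :=
          add_le_add le_rfl (chInfAt_le_right hB.1.1.1 hσ0 hB0 hq)
      _ = π q := add_sub_cancel _ _
  exact le_antisymm ((add_le_iff_nonpos_right _).mp (C.le_acPart hmem hp)) (hτ0 p hp)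

lemma chInfAt_chargeAbs_sub_singularPart_eq_zero {π₁ π₂ : E → E} (h₁ : π₁ ∈ C.baR C.e)
    (h₁0 : ∀ p ∈ Comp C.e, 0 ≤ π₁ p) (h₂ : π₂ ∈ C.baR C.e) (h₂0 : ∀ p ∈ Comp C.e, 0 ≤ π₂ p)
    (hν : ν ∈ C.baT) :
    chInfAt C.e (chargeAbs C.e fun x => C.singularPart π₁ x - C.singularPart π₂ x)
      (chargeAbs C.e ν) C.e = 0 := by
  set σ₁ := C.singularPart π₁
  set σ₂ := C.singularPart π₂
  have hσ₁ := C.singularPart_mem_baR h₁ h₁0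
  have hσ₂ := C.singularPart_mem_baR h₂ h₂0
  have hσ₁0 (q : E) (hq : q ∈ Comp C.e) := C.singularPart_nonneg h₁ h₁0 hq
  have hσ₂0 (q : E) (hq : q ∈ Comp C.e) := C.singularPart_nonneg h₂ h₂0 hq
  have hσ := C.mem_baSet_of_mem_baR (C.sub_mem_baR hσ₁ hσ₂)
  have hB := C.chargeAbs_mem_baT hν
  have hB0 (q : E) (hq : q ∈ Comp C.e) :=
    chargeAbs_nonneg (C.mem_baSet_of_mem_baR hν.1) C.e_nonneg hq
  have he := self_mem_comp C.e_nonneg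
  refine le_antisymm ?_ (chInfAt_nonneg (fun q hq => chargeAbs_nonneg hσ C.e_nonneg hq) hB0 he)
  calc chInfAt C.e (chargeAbs C.e fun x => σ₁ x - σ₂ x) (chargeAbs C.e ν) C.e
      ≤ chInfAt C.e (fun x => σ₁ x + σ₂ x) (chargeAbs C.e ν) C.e :=
        chInfAt_mono (fun q hq => chargeAbs_le_add_of_eq_sub hσ₁.1 hσ₂.1 hσ₁0 hσ₂0
          (fun _ _ => rfl) hq) (fun q hq => chargeAbs_nonneg hσ C.e_nonneg hq) hB0 he
    _ ≤ chInfAt C.e σ₁ (chargeAbs C.e ν) C.e + chInfAt C.e σ₂ (chargeAbs C.e ν) C.e :=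
        chInfAt_add_le hσ₁.1 hσ₂.1 hB.1.1 hσ₁0 hσ₂0 hB0 he
    _ = 0 := by
        rw [C.chInfAt_singularPart_eq_zero h₁ h₁0 hB hB0 he,
          C.chInfAt_singularPart_eq_zero h₂ h₂0 hB hB0 he, add_zero]

lemma exists_mem_baT_add_disjoint (hμ : μ ∈ C.baR C.e) :
    ∃ μ₁ ∈ C.baT, ∃ μ₂ ∈ C.baR C.e, (∀ p ∈ Comp C.e, μ p = μ₁ p + μ₂ p) ∧
      ∀ ν ∈ C.baT, chInfAt C.e (chargeAbs C.e μ₂) (chargeAbs C.e ν) C.e = 0 := by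
  have hμS := C.mem_baSet_of_mem_baR hμ
  have h₁ : chargePos C.e μ ∈ C.baR C.e := C.chargePos_mem_baR hμ
  have h₂ : chargeNeg C.e μ ∈ C.baR C.e := C.chargePos_mem_baR (C.neg_mem_baR hμ)
  have h₁0 (p : E) (hp : p ∈ Comp C.e) : 0 ≤ chargePos C.e μ p :=
    chargePos_nonneg hμS C.e_nonneg hp
  have h₂0 (p : E) (hp : p ∈ Comp C.e) : 0 ≤ chargeNeg C.e μ p :=
    chargePos_nonneg (neg_mem_baSet hμS) C.e_nonneg hp
  refine ⟨fun x => C.acPart (chargePos C.e μ) x - C.acPart (chargeNeg C.e μ) x,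
    C.sub_mem_baT (C.acPart_mem_acMinorants h₁ h₁0).1 (C.acPart_mem_acMinorants h₂ h₂0).1,
    fun x => C.singularPart (chargePos C.e μ) x - C.singularPart (chargeNeg C.e μ) x,
    C.sub_mem_baR (C.singularPart_mem_baR h₁ h₁0) (C.singularPart_mem_baR h₂ h₂0),
    fun p hp => ?_, fun ν hν => C.chInfAt_chargeAbs_sub_singularPart_eq_zero h₁ h₁0 h₂ h₂0 hν⟩
  rw [← chargePos_sub_chargeNeg hμS hp]
  simp only [singularPart]
  abel

end CRT

/-- **Lebesgue decomposition.** Let `(E,e,T)` be a `T`-universally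
complete conditional Riesz triple.  Then `ba(T)`, the set of `T`-absolutely continuous
order bounded signed `R(T)`-valued charges on `C_e`, is an `R(T)`-submodule of
`ba(C_e,R(T))` and a projection band in `ba(C_e,R(T))`: it is solid, order closed,
and every `μ ∈ ba(C_e,R(T))` decomposes as `μ = μ₁ + μ₂` with `μ₁ ∈ ba(T)` and `μ₂`
disjoint from `ba(T)`. -/
theorem baT_projection_band {E : Type u} {G : Type v}
    [ConditionallyCompleteLattice E] [AddCommGroup E] [Module ℝ E]
    [CovariantClass E E (· + ·) (· ≤ ·)] [PosSMulMono ℝ E]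
    [ConditionallyCompleteLattice G] [AddCommGroup G] [Module ℝ G]
    [CovariantClass G G (· + ·) (· ≤ ·)] [PosSMulMono ℝ G]
    (C : CRT E G) :
    -- R(T)-submodule
    (∀ μ ∈ C.baT, ∀ ν ∈ C.baT, (fun p => μ p + ν p) ∈ C.baT) ∧
    (∀ μ ∈ C.baT, ∀ r : ℝ, (fun p => r • μ p) ∈ C.baT) ∧
    (∀ μ ∈ C.baT, ∀ g ∈ C.R, (fun p => C.sm g (μ p)) ∈ C.baT) ∧
    -- solid (an order ideal)
    (∀ μ ∈ C.baR C.e, ∀ ν ∈ C.baT,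
      (∀ p ∈ Comp C.e, chargeAbs C.e μ p ≤ chargeAbs C.e ν p) → μ ∈ C.baT) ∧
    -- order closed (a band)
    (∀ S : Set (E → E), S ⊆ C.baT → S.Nonempty → DirectedOn (baLe C.e) S →
      ∀ η ∈ C.baR C.e, (∀ μ ∈ S, baLe C.e μ η) →
        (∀ ξ ∈ C.baR C.e, (∀ μ ∈ S, baLe C.e μ ξ) → baLe C.e η ξ) → η ∈ C.baT) ∧
    -- a projection band
    (∀ μ ∈ C.baR C.e, ∃ μ₁ ∈ C.baT, ∃ μ₂ ∈ C.baR C.e,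
      (∀ p ∈ Comp C.e, μ p = μ₁ p + μ₂ p) ∧
      ∀ ν ∈ C.baT, chInfAt C.e (chargeAbs C.e μ₂) (chargeAbs C.e ν) C.e = 0) :=
  ⟨fun _ hμ _ hν => C.add_mem_baT hμ hν,
    fun _ hμ r => C.smul_mem_baT hμ r,
    fun _ hμ _ hg => C.sm_mem_baT hμ hg,
    fun _ hμ _ hν h => C.mem_baT_of_chargeAbs_le hμ hν h,
    fun _ hS hne hdir _ hη hub hmin => C.mem_baT_of_isLUB_baR hS hne hdir hη hub hmin,
    fun _ hμ => C.exists_mem_baT_add_disjoint hμ⟩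

end RieszPaper

end
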